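/- arXiv:2509.07244 — 3 statements merged into one kernel-verified Lean document; each statement's English description precedes it below -/
import Mathlib

section
/- Let μ be any probability measure on ℝ with characteristic function f(t) = ∫ exp(itx) dμ(x). If the characteristic function is separated from zero, i.e. there exists ε > 0 with |f(t)| ≥ ε for all t ∈ ℝ, then μ has an atom: there exists x ∈ ℝ with μ({x}) > 0. -/
open MeasureTheory Complex

/-- The characteristic function of a measure `μ` on `ℝ`:
`f(t) = ∫ exp(itx) dμ(x)`. -/
noncomputable def charFn (μ : Measure ℝ) (t : ℝ) : ℂ :=
  ∫ x : ℝ, Complex.exp (t * x * Complex.I) ∂μ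

open Filter Topology Set

namespace CharFnAux

/-- The Dirichlet-type kernel `sin(Tu)/(Tu)` (with value `1` at `u = 0`). -/
noncomputable def Ker (T u : ℝ) : ℝ := if u = 0 then 1 else Real.sin (T * u) / (T * u)

lemma abs_Ker_le_one (T u : ℝ) : |Ker T u| ≤ 1 := by
  unfold Ker
  split_ifs with h
  · simp
  rcases eq_or_ne (T * u) 0 with h0 | h0
  · simp [h0]
  · rw [abs_div]
    rw [div_le_one (abs_pos.2 h0)]
    exact Real.abs_sin_le_abs

lemma measurable_Ker (T : ℝ) : Measurable (Ker T) := by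
  unfold Ker
  exact Measurable.ite (measurableSet_eq) measurable_const
    ((Real.measurable_sin.comp (measurable_const.mul measurable_id)).div
      (measurable_const.mul measurable_id))

lemma tendsto_Ker (u : ℝ) (hu : u ≠ 0) :
    Tendsto (fun n : ℕ => Ker n u) atTop (𝓝 0) := by
  have habs : ∀ n : ℕ, ‖Ker n u‖ ≤ (1 / |u|) * (1 / n) := by
    intro n
    rcases Nat.eq_zero_or_pos n with rfl | hn
    · simp [Ker, hu]
    have hnu : (n : ℝ) * u ≠ 0 := by
      exact mul_ne_zero (Nat.cast_ne_zero.2 hn.ne') hu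
    simp only [Ker, hu, if_false, Real.norm_eq_abs, abs_div]
    rw [div_le_iff₀ (abs_pos.2 hnu)]
    have h1 : |Real.sin ((n : ℝ) * u)| ≤ 1 := Real.abs_sin_le_one _
    calc |Real.sin ((n : ℝ) * u)| ≤ 1 := h1
      _ = (1 / |u|) * (1 / n) * ((n : ℝ) * |u|) := by
          field_simp
      _ ≤ 1 / |u| * (1 / ↑n) * |(n : ℝ) * u| := by
          rw [abs_mul, Nat.abs_cast]
  have hb : Tendsto (fun n : ℕ => (1 / |u|) * (1 / n)) atTop (𝓝 0) := by
    have := tendsto_one_div_atTop_nhds_zero_nat (𝕜 := ℝ)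
    simpa using this.const_mul (1 / |u|)
  exact squeeze_zero_norm habs hb

lemma inner_integral (T : ℝ) (hT : 0 < T) (u : ℝ) :
    (∫ t in (-T)..T, Complex.exp (t * u * Complex.I)) = ((2 * T * Ker T u : ℝ) : ℂ) := by
  rcases eq_or_ne u 0 with rfl | h0
  · simp only [Ker, if_pos rfl, Complex.ofReal_zero, mul_zero, zero_mul,
      Complex.exp_zero, mul_one]
    rw [intervalIntegral.integral_const]
    push_cast
    simp [smul_eq_mul]
    ring
  · have hcne : ((u : ℂ) * Complex.I) ≠ 0 :=
      mul_ne_zero (Complex.ofReal_ne_zero.2 h0) Complex.I_ne_zero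
    have h1 : (∫ t in (-T)..T, Complex.exp (t * u * Complex.I))
        = ∫ t in (-T)..T, Complex.exp (((u : ℂ) * Complex.I) * t) := by
      congr 1
      ext t
      ring_nf
    rw [h1, integral_exp_mul_complex hcne]
    have hTu : (T : ℝ) * u ≠ 0 := mul_ne_zero hT.ne' h0
    have hu' : (u : ℂ) ≠ 0 := Complex.ofReal_ne_zero.2 h0
    have hT' : (T : ℂ) ≠ 0 := Complex.ofReal_ne_zero.2 hT.ne'
    have e1 : (u : ℂ) * Complex.I * (T : ℂ) = ((T * u : ℝ) : ℂ) * Complex.I := by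
      push_cast; ring
    have e2 : (u : ℂ) * Complex.I * ((-T : ℝ) : ℂ) = (-((T * u : ℝ) : ℂ)) * Complex.I := by
      push_cast; ring
    rw [e1, e2, Complex.exp_mul_I, Complex.exp_mul_I, Complex.cos_neg, Complex.sin_neg]
    have h2 : ((2 * T * Ker T u : ℝ) : ℂ)
        = 2 * Complex.sin (((T * u : ℝ) : ℂ)) / (u : ℂ) := by
      simp only [Ker, h0, if_false]
      rw [Complex.ofReal_mul, Complex.ofReal_mul, Complex.ofReal_div, Complex.ofReal_sin,
        Complex.ofReal_mul]
      field_simp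
      push_cast; ring
    rw [h2]
    set z : ℂ := ((T * u : ℝ) : ℂ) with hz
    rw [div_eq_div_iff hcne hu']
    ring

variable (μ : Measure ℝ) [IsProbabilityMeasure μ]

lemma continuous_charFn : Continuous (charFn μ) := by
  apply MeasureTheory.continuous_of_dominated (bound := fun _ => (1 : ℝ))
  · intro t
    exact (Continuous.aestronglyMeasurable (by continuity))
  · intro t
    filter_upwards with x
    simp [Complex.norm_exp]
  · exact integrable_const 1
  · filter_upwards with x
    continuity

lemma my_integral_ofReal {α : Type*} [MeasurableSpace α] (ν : Measure α) (f : α → ℝ) :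
    ∫ x, ((f x : ℝ) : ℂ) ∂ν = ((∫ x, f x ∂ν : ℝ) : ℂ) :=
  integral_ofReal

/-- The key identity: `∫_{-T}^{T} |f(t)|² dt = 2T ∫∫ Ker T (x - y)`. -/
lemma key (T : ℝ) (hT : 0 < T) :
    ∫ t in (-T)..T, Complex.normSq (charFn μ t)
      = 2 * T * ∫ p : ℝ × ℝ, Ker T (p.1 - p.2) ∂(μ.prod μ) := by
  have step1 : ∀ t : ℝ, (Complex.normSq (charFn μ t) : ℂ)
      = ∫ p : ℝ × ℝ, Complex.exp (t * (p.1 - p.2) * Complex.I) ∂(μ.prod μ) := by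
    intro t
    rw [← Complex.mul_conj]
    have hconj : (starRingEnd ℂ) (charFn μ t)
        = ∫ y : ℝ, Complex.exp (-(t * y * Complex.I)) ∂μ := by
      rw [charFn, ← integral_conj]
      congr 1
      ext y
      rw [← Complex.exp_conj]
      congr 1
      rw [map_mul, map_mul, Complex.conj_ofReal, Complex.conj_ofReal, Complex.conj_I]
      ring
    rw [hconj, charFn, ← MeasureTheory.integral_prod_mul]
    apply integral_congr_ae
    filter_upwards with p
    rw [← Complex.exp_add]
    congr 1
    push_cast
    ring
  have hle : -T ≤ T := by linarith
  -- the function on the product space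
  set e : ℝ × (ℝ × ℝ) → ℂ := fun q => Complex.exp (q.1 * (q.2.1 - q.2.2) * Complex.I) with he
  have hcont : Continuous e := by
    apply Complex.continuous_exp.comp
    exact ((Complex.continuous_ofReal.comp continuous_fst).mul
      ((Complex.continuous_ofReal.comp (continuous_fst.comp continuous_snd)).sub
        (Complex.continuous_ofReal.comp (continuous_snd.comp continuous_snd)))).mul
      continuous_const
  haveI : IsFiniteMeasure ((volume : Measure ℝ).restrict (Set.Ioc (-T) T)) := by
    constructor
    rw [Measure.restrict_apply_univ]
    exact measure_Ioc_lt_top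
  have hint : Integrable e
      (((volume : Measure ℝ).restrict (Set.Ioc (-T) T)).prod (μ.prod μ)) := by
    apply (integrable_const (1 : ℝ)).mono' hcont.aestronglyMeasurable
    filter_upwards with q
    simp [he, Complex.norm_exp]
  have swap :
      ∫ t in Set.Ioc (-T) T, (∫ p : ℝ × ℝ,
          Complex.exp (t * (p.1 - p.2) * Complex.I) ∂(μ.prod μ))
        = ∫ p : ℝ × ℝ, (∫ t in Set.Ioc (-T) T,
          Complex.exp (t * (p.1 - p.2) * Complex.I)) ∂(μ.prod μ) :=
    MeasureTheory.integral_integral_swap hint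
  have inner : ∀ p : ℝ × ℝ,
      (∫ t in (-T)..T, Complex.exp (t * ((p.1 : ℂ) - (p.2 : ℂ)) * Complex.I))
        = ((2 * T * Ker T (p.1 - p.2) : ℝ) : ℂ) := by
    intro p
    have hc : ∀ t : ℝ, (t : ℂ) * ((p.1 : ℂ) - (p.2 : ℂ)) * Complex.I
        = (t : ℂ) * ((p.1 - p.2 : ℝ) : ℂ) * Complex.I := by
      intro t; push_cast; ring
    simp only [hc]
    exact inner_integral T hT (p.1 - p.2)
  calc ∫ t in (-T)..T, Complex.normSq (charFn μ t)
      = (((∫ t in (-T)..T, (Complex.normSq (charFn μ t) : ℂ))).re) := by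
        rw [intervalIntegral.integral_ofReal]
        simp
    _ = ((∫ p : ℝ × ℝ, ((2 * T * Ker T (p.1 - p.2) : ℝ) : ℂ) ∂(μ.prod μ)).re) := by
        congr 2
        calc (∫ t in (-T)..T, (Complex.normSq (charFn μ t) : ℂ))
            = ∫ t in (-T)..T, (∫ p : ℝ × ℝ,
                Complex.exp (t * (p.1 - p.2) * Complex.I) ∂(μ.prod μ)) := by
              simp only [step1]
          _ = ∫ t in Set.Ioc (-T) T, (∫ p : ℝ × ℝ,
                Complex.exp (t * (p.1 - p.2) * Complex.I) ∂(μ.prod μ)) := by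
              rw [intervalIntegral.integral_of_le hle]
          _ = ∫ p : ℝ × ℝ, (∫ t in Set.Ioc (-T) T,
                Complex.exp (t * (p.1 - p.2) * Complex.I)) ∂(μ.prod μ) := swap
          _ = ∫ p : ℝ × ℝ, ((2 * T * Ker T (p.1 - p.2) : ℝ) : ℂ) ∂(μ.prod μ) := by
              apply integral_congr_ae
              filter_upwards with p
              rw [← intervalIntegral.integral_of_le hle]
              exact inner p
    _ = ∫ p : ℝ × ℝ, 2 * T * Ker T (p.1 - p.2) ∂(μ.prod μ) := by
        rw [my_integral_ofReal (μ.prod μ) (fun p => 2 * T * Ker T (p.1 - p.2))]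
        simp
    _ = 2 * T * ∫ p : ℝ × ℝ, Ker T (p.1 - p.2) ∂(μ.prod μ) := by
        rw [integral_const_mul]

end CharFnAux

/-- If the characteristic function of a probability measure `μ` on `ℝ` is
separated from zero, then `μ` has an atom. -/
theorem charFn_sep_from_zero_imp_exists_atom
    (μ : Measure ℝ) [IsProbabilityMeasure μ]
    (hsep : ∃ ε : ℝ, 0 < ε ∧ ∀ t : ℝ, ε ≤ ‖charFn μ t‖) :
    ∃ x : ℝ, 0 < μ {x} := by
  obtain ⟨ε, hε, hsep⟩ := hsep
  by_contra hno
  push_neg at hno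
  have hno' : ∀ x : ℝ, μ {x} = 0 := fun x => le_antisymm (hno x) zero_le
  -- the diagonal is null for μ × μ
  have hdiag : (μ.prod μ) {p : ℝ × ℝ | p.1 = p.2} = 0 := by
    have hmeas : MeasurableSet {p : ℝ × ℝ | p.1 = p.2} :=
      measurableSet_eq_fun measurable_fst measurable_snd
    rw [MeasureTheory.Measure.prod_apply hmeas]
    have : ∀ x : ℝ, μ (Prod.mk x ⁻¹' {p : ℝ × ℝ | p.1 = p.2}) = 0 := by
      intro x
      have : (Prod.mk x ⁻¹' {p : ℝ × ℝ | p.1 = p.2}) = {y : ℝ | x = y} := rfl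
      rw [this]
      have : {y : ℝ | x = y} = {x} := by ext y; simp [eq_comm]
      rw [this]
      exact hno' x
    simp [hno']
  have hae : ∀ᵐ p : ℝ × ℝ ∂(μ.prod μ), p.1 - p.2 ≠ 0 := by
    rw [ae_iff]
    convert hdiag using 2
    ext p
    simp [sub_eq_zero]
  -- dominated convergence: ∫∫ Ker n (x-y) → 0
  have hmeasK : ∀ n : ℕ, AEStronglyMeasurable
      (fun p : ℝ × ℝ => CharFnAux.Ker n (p.1 - p.2)) (μ.prod μ) := by
    intro n
    exact ((CharFnAux.measurable_Ker n).comp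
      (measurable_fst.sub measurable_snd)).aestronglyMeasurable
  have hDCT : Tendsto (fun n : ℕ =>
      ∫ p : ℝ × ℝ, CharFnAux.Ker n (p.1 - p.2) ∂(μ.prod μ)) atTop (𝓝 0) := by
    have := MeasureTheory.tendsto_integral_of_dominated_convergence
      (F := fun n : ℕ => fun p : ℝ × ℝ => CharFnAux.Ker n (p.1 - p.2))
      (f := fun _ : ℝ × ℝ => (0 : ℝ)) (bound := fun _ => (1 : ℝ))
      (μ := μ.prod μ) hmeasK (integrable_const 1)
      (by
        intro n
        filter_upwards with p
        exact CharFnAux.abs_Ker_le_one _ _)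
      (by
        filter_upwards [hae] with p hp
        exact CharFnAux.tendsto_Ker _ hp)
    simpa using this
  -- lower bound: ε² ≤ ∫∫ Ker n (x-y) for n ≥ 1
  have hlow : ∀ n : ℕ, 1 ≤ n → ε ^ 2 ≤
      ∫ p : ℝ × ℝ, CharFnAux.Ker n (p.1 - p.2) ∂(μ.prod μ) := by
    intro n hn
    have hTpos : (0 : ℝ) < n := by exact_mod_cast hn
    have hkey := CharFnAux.key μ n hTpos
    have hcont : Continuous fun t => Complex.normSq (charFn μ t) :=
      Complex.continuous_normSq.comp (CharFnAux.continuous_charFn μ)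
    have hlb : ∀ t : ℝ, ε ^ 2 ≤ Complex.normSq (charFn μ t) := by
      intro t
      rw [← Complex.sq_norm]
      exact pow_le_pow_left₀ hε.le (hsep t) 2
    have hIineq : 2 * (n : ℝ) * ε ^ 2
        ≤ ∫ t in (-(n : ℝ))..(n : ℝ), Complex.normSq (charFn μ t) := by
      have h1 : (∫ t in (-(n : ℝ))..(n : ℝ), ε ^ 2)
          ≤ ∫ t in (-(n : ℝ))..(n : ℝ), Complex.normSq (charFn μ t) := by
        apply intervalIntegral.integral_mono_on (by linarith)
          (intervalIntegrable_const)
          (hcont.intervalIntegrable _ _)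
        intro t _
        exact hlb t
      rw [intervalIntegral.integral_const, smul_eq_mul] at h1
      calc 2 * (n : ℝ) * ε ^ 2 = ((n : ℝ) - -(n : ℝ)) * ε ^ 2 := by ring
        _ ≤ _ := h1
    rw [hkey] at hIineq
    have h2n : (0 : ℝ) < 2 * n := by linarith
    nlinarith [hIineq]
  have : ε ^ 2 ≤ 0 :=
    ge_of_tendsto hDCT (eventually_atTop.2 ⟨1, hlow⟩)
  nlinarith [hε]
end

section
/- Let μ be any probability measure on ℝ with characteristic function f(t) = ∫ exp(itx) dμ(x), and let D = {x : μ({x}) > 0} be its set of atoms. If there exists ε > 0 with |f(t)| ≥ ε for all t ∈ ℝ, then the characteristic function of the discrete part of μ is also separated from zero: there exists ε' > 0 such that |∫_D exp(itx) dμ(x)| ≥ ε' for all t ∈ ℝ. -/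
open MeasureTheory Complex
open Filter

namespace CharFnSep

noncomputable def e (u x : ℝ) : ℂ := Complex.exp (u * x * Complex.I)

lemma abs_e (u x : ℝ) : ‖e u x‖ = 1 := by
  simp [e, Complex.norm_exp]

lemma norm_e (u x : ℝ) : ‖e u x‖ = 1 := abs_e u x

lemma continuous_e (u : ℝ) : Continuous (e u) := by unfold e; fun_prop

lemma integrable_e (m : Measure ℝ) [IsFiniteMeasure m] (u : ℝ) :
    Integrable (e u) m := by
  apply (integrable_const (1:ℝ)).mono' ((continuous_e u).aestronglyMeasurable)
  filter_upwards with x using by rw [norm_e]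

noncomputable def ecf (m : Measure ℝ) (u : ℝ) : ℂ := ∫ x, e u x ∂m

lemma continuous_ecf (m : Measure ℝ) [IsFiniteMeasure m] : Continuous (ecf m) := by
  apply continuous_of_dominated (bound := fun _ => (1:ℝ))
    (fun u => (continuous_e u).aestronglyMeasurable)
    (fun u => by filter_upwards with x using by rw [norm_e])
    (integrable_const 1)
  filter_upwards with x
  show Continuous fun u => e u x
  unfold e; fun_prop

lemma norm_ecf_le (m : Measure ℝ) [IsFiniteMeasure m] (u : ℝ) :
    ‖ecf m u‖ ≤ (m Set.univ).toReal := by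
  have := norm_integral_le_of_norm_le_const (μ := m) (f := e u) (C := 1)
    (by filter_upwards with x using by rw [norm_e])
  exact this.trans (le_of_eq (one_mul _))

lemma e_mul (u v x : ℝ) : e (u + v) x = e u x * e v x := by
  simp only [e, ← Complex.exp_add]; congr 1; push_cast; ring

lemma e_sub_e (u v x : ℝ) : ‖e u x - e v x‖ = ‖e (u - v) x - 1‖ := by
  have : e u x - e v x = e v x * (e (u-v) x - 1) := by
    rw [mul_sub, ← e_mul, mul_one]; congr 1; ring
  rw [this, norm_mul, norm_e, one_mul]

lemma diag_null (ν : Measure ℝ) [SFinite ν] (hν : ∀ x : ℝ, ν {x} = 0) :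
    (ν.prod ν) {p : ℝ × ℝ | p.1 = p.2} = 0 := by
  have hd : MeasurableSet {p : ℝ × ℝ | p.1 = p.2} :=
    isClosed_eq continuous_fst continuous_snd |>.measurableSet
  rw [Measure.prod_apply hd]
  have : ∀ x : ℝ, ν (Prod.mk x ⁻¹' {p : ℝ × ℝ | p.1 = p.2}) = 0 := by
    intro x
    have : (Prod.mk x ⁻¹' {p : ℝ × ℝ | p.1 = p.2}) = {x} := by
      ext y; simp [eq_comm]
    rw [this]; exact hν x
  simp [this, hν]

lemma wiener (ν : Measure ℝ) [IsFiniteMeasure ν] (hν : ∀ x : ℝ, ν {x} = 0) (t : ℝ) :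
    Tendsto (fun T : ℝ => (∫ τ in Set.Ioc (0:ℝ) T, Complex.normSq (ecf ν (t+τ))) / T)
      atTop (nhds 0) := by
  set F : ℝ → ℝ × ℝ → ℂ :=
    fun T p => (∫ τ in Set.Ioc (0:ℝ) T, e (t+τ) (p.1 - p.2)) / T with hF
  have hfin : ∀ T : ℝ, IsFiniteMeasure (volume.restrict (Set.Ioc (0:ℝ) T)) := by
    intro T
    constructor
    rw [Measure.restrict_apply_univ, Real.volume_Ioc]
    exact ENNReal.ofReal_lt_top
  have hFmeas : ∀ T : ℝ, AEStronglyMeasurable (F T) (ν.prod ν) := by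
    intro T
    haveI := hfin T
    have hcont : Continuous fun p : ℝ × ℝ => (∫ τ in Set.Ioc (0:ℝ) T, e (t+τ) (p.1 - p.2)) := by
      apply continuous_of_dominated (bound := fun _ => (1:ℝ))
      · intro p
        exact (by unfold e; fun_prop : Continuous fun τ : ℝ => e (t+τ) (p.1 - p.2)).aestronglyMeasurable
      · intro p; filter_upwards with τ using by rw [norm_e]
      · exact integrable_const 1
      · filter_upwards with τ
        show Continuous fun p : ℝ × ℝ => e (t+τ) (p.1 - p.2)
        exact (continuous_e (t+τ)).comp (continuous_fst.sub continuous_snd)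
    exact (hcont.div_const _).aestronglyMeasurable
  have hid : ∀ T : ℝ, 0 < T →
      (∫ τ in Set.Ioc (0:ℝ) T, Complex.normSq (ecf ν (t+τ))) / T
        = (∫ p, F T p ∂(ν.prod ν)).re := by
    intro T hT
    haveI := hfin T
    have swap : ∫ p, (∫ τ in Set.Ioc (0:ℝ) T, e (t+τ) (p.1 - p.2)) ∂(ν.prod ν)
        = ∫ τ in Set.Ioc (0:ℝ) T, (∫ p, e (t+τ) (p.1 - p.2) ∂(ν.prod ν)) := by
      apply (integral_integral_swap _).symm
      apply (integrable_const (1:ℝ)).mono'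
      · apply Continuous.aestronglyMeasurable
        show Continuous fun q : ℝ × (ℝ × ℝ) => e (t + q.1) (q.2.1 - q.2.2)
        unfold e; fun_prop
      · filter_upwards with q using by rw [Function.uncurry, norm_e]
    have inner : ∀ u : ℝ, (∫ p, e u (p.1 - p.2) ∂(ν.prod ν))
        = (Complex.normSq (ecf ν u) : ℂ) := by
      intro u
      have : ∀ p : ℝ × ℝ, e u (p.1 - p.2) = e u p.1 * (starRingEnd ℂ) (e u p.2) := by
        intro p
        simp only [e, ← Complex.exp_conj, ← Complex.exp_add]
        congr 1
        simp [Complex.conj_I]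
        push_cast
        ring
      rw [show (fun p : ℝ × ℝ => e u (p.1-p.2)) = fun p : ℝ × ℝ => e u p.1 * (starRingEnd ℂ) (e u p.2) from funext this]
      rw [MeasureTheory.integral_prod_mul (f := fun x => e u x) (g := fun y => (starRingEnd ℂ) (e u y))]
      rw [integral_conj]
      exact Complex.mul_conj _
    rw [hF]
    simp only
    rw [integral_div, swap]
    have : ∫ τ in Set.Ioc (0:ℝ) T, (∫ p, e (t+τ) (p.1 - p.2) ∂(ν.prod ν))
        = ((∫ τ in Set.Ioc (0:ℝ) T, Complex.normSq (ecf ν (t+τ)) : ℝ) : ℂ) :=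
      (integral_congr_ae (Filter.Eventually.of_forall fun τ => inner (t+τ))).trans
        integral_ofReal
    rw [this]
    rw [show ((∫ τ in Set.Ioc (0:ℝ) T, Complex.normSq (ecf ν (t+τ)) : ℝ) : ℂ) / (T:ℂ)
        = (((∫ τ in Set.Ioc (0:ℝ) T, Complex.normSq (ecf ν (t+τ))) / T : ℝ) : ℂ) by push_cast; ring]
    rw [Complex.ofReal_re]
  have hmain : Tendsto (fun T => ∫ p, F T p ∂(ν.prod ν)) atTop (nhds 0) := by
    have h0 : ∫ p, (0:ℂ) ∂(ν.prod ν) = 0 := integral_zero _ _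
    rw [show (0:ℂ) = ∫ p, (0:ℂ) ∂(ν.prod ν) from h0.symm]
    apply tendsto_integral_filter_of_dominated_convergence (bound := fun _ => (1:ℝ))
    · filter_upwards with T using hFmeas T
    · filter_upwards [eventually_ge_atTop (1:ℝ)] with T hT
      filter_upwards with p
      have hT0 : (0:ℝ) < T := lt_of_lt_of_le one_pos hT
      haveI := hfin T
      rw [hF]
      simp only [norm_div]
      have hb : ‖∫ τ in Set.Ioc (0:ℝ) T, e (t+τ) (p.1 - p.2)‖ ≤ T := by
        calc ‖∫ τ in Set.Ioc (0:ℝ) T, e (t+τ) (p.1 - p.2)‖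
            ≤ 1 * (volume (Set.Ioc (0:ℝ) T)).toReal := by
              apply norm_setIntegral_le_of_norm_le_const
              · rw [Real.volume_Ioc]; exact ENNReal.ofReal_lt_top
              · intro τ _; rw [norm_e]
          _ = T := by rw [Real.volume_Ioc, ENNReal.toReal_ofReal (by linarith), one_mul, sub_zero]
      have : ‖(T:ℂ)‖ = T := by rw [Complex.norm_real, Real.norm_of_nonneg hT0.le]
      rw [this, div_le_one hT0]
      exact hb.trans (le_of_eq rfl) |>.trans (by nlinarith)
    · exact integrable_const 1
    · have hdiag := diag_null ν hν
      have : ∀ᵐ p ∂(ν.prod ν), p.1 ≠ p.2 := by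
        rw [ae_iff]; simpa using hdiag
      filter_upwards [this] with p hp
      set c : ℝ := p.1 - p.2 with hc
      have hc0 : c ≠ 0 := sub_ne_zero.mpr hp
      have key : ∀ T : ℝ, 0 < T → ‖F T p‖ ≤ (2 / |c|) / T := by
        intro T hT
        have expand : (∫ τ in Set.Ioc (0:ℝ) T, e (t+τ) c)
            = e t c * ((Complex.exp ((c*Complex.I) * T) - Complex.exp ((c*Complex.I) * 0)) / (c*Complex.I)) := by
          have : ∀ τ : ℝ, e (t+τ) c = e t c * Complex.exp ((↑c*Complex.I) * ↑τ) := by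
            intro τ
            simp only [e, ← Complex.exp_add]
            congr 1; push_cast; ring
          rw [integral_congr_ae (Filter.Eventually.of_forall this), integral_const_mul]
          congr 1
          rw [← intervalIntegral.integral_of_le hT.le]
          exact integral_exp_mul_complex (by
            simp only [Ne, mul_eq_zero, Complex.I_ne_zero, or_false]
            exact_mod_cast hc0)
        rw [hF]
        simp only [norm_div]
        rw [expand]
        have h1 : ‖e t c * ((Complex.exp ((↑c*Complex.I) * T) - Complex.exp ((↑c*Complex.I) * 0)) / (↑c*Complex.I))‖
            ≤ 2 / |c| := by
          rw [norm_mul, norm_e, one_mul, norm_div]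
          have num : ‖Complex.exp ((↑c*Complex.I) * T) - Complex.exp ((↑c*Complex.I) * 0)‖ ≤ 2 := by
            calc ‖Complex.exp ((↑c*Complex.I) * T) - Complex.exp ((↑c*Complex.I) * 0)‖
                ≤ ‖Complex.exp ((↑c*Complex.I) * T)‖ + ‖Complex.exp ((↑c*Complex.I) * 0)‖ := norm_sub_le _ _
              _ ≤ 2 := by
                  have a1 : ‖Complex.exp ((↑c*Complex.I) * T)‖ = 1 := by
                    rw [Complex.norm_exp]; simp
                  have a2 : ‖Complex.exp ((↑c*Complex.I) * 0)‖ = 1 := by simp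
                  rw [a1, a2]; norm_num
          have den : ‖(↑c*Complex.I)‖ = |c| := by
            rw [norm_mul, Complex.norm_real, Complex.norm_I, mul_one, Real.norm_eq_abs]
          rw [den]
          exact div_le_div_of_nonneg_right num (abs_pos.mpr hc0).le |>.trans (le_refl _)
        have hTn : ‖(T:ℂ)‖ = T := by rw [Complex.norm_real, Real.norm_of_nonneg hT.le]
        rw [hTn]
        exact div_le_div_of_nonneg_right h1 hT.le |>.trans (le_refl _)
      have hb : Tendsto (fun T : ℝ => (2 / |c|) / T) atTop (nhds 0) :=
        tendsto_const_nhds.div_atTop tendsto_id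
      apply squeeze_zero_norm' _ hb
      filter_upwards [eventually_gt_atTop (0:ℝ)] with T hT using key T hT
  have : Tendsto (fun T => (∫ p, F T p ∂(ν.prod ν)).re) atTop (nhds 0) := by
    have := (Complex.continuous_re.tendsto 0).comp hmain
    simpa [Function.comp_def] using this
  apply this.congr'
  filter_upwards [eventually_gt_atTop (0:ℝ)] with T hT using (hid T hT).symm

lemma net_lemma (s : Finset ℝ) {δ : ℝ} (hδ : 0 < δ) :
    ∃ S : ℝ, 0 < S ∧ ∀ a : ℝ, ∃ τ ∈ Set.Icc a (a + S),
      ∀ x ∈ s, ‖e τ x - 1‖ ≤ δ := by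
  classical
  set φ : ℝ → (s → ℂ) := fun a x => e a x.1 with hφ
  have htb : TotallyBounded (Set.range φ) := by
    refine TotallyBounded.subset ?_ ((isCompact_closedBall (0 : s → ℂ) 1).totallyBounded)
    rintro _ ⟨a, rfl⟩
    rw [Metric.mem_closedBall, dist_zero_right]
    refine (pi_norm_le_iff_of_nonneg zero_le_one).mpr fun x => ?_
    rw [norm_e]
  obtain ⟨t, hts, htfin, hcov⟩ :=
    htb.exists_subset (Metric.dist_mem_uniformity (half_pos hδ))
  have hex : ∀ y ∈ t, ∃ r : ℝ, φ r = y := fun y hy => hts hy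
  set R : Set ℝ := (fun y : (s → ℂ) => if h : ∃ r, φ r = y then h.choose else 0) '' t with hR
  have hRfin : R.Finite := htfin.image _
  have hcov' : ∀ a : ℝ, ∃ r ∈ R, dist (φ a) (φ r) < δ/2 := by
    intro a
    obtain ⟨y, hy, hdy⟩ := Set.mem_iUnion₂.mp (hcov ⟨a, rfl⟩)
    have hey : ∃ r, φ r = y := hex y hy
    refine ⟨_, Set.mem_image_of_mem _ hy, ?_⟩
    rw [dif_pos hey, hey.choose_spec]
    exact hdy
  have hRne : R.Nonempty := by
    obtain ⟨r, hr, _⟩ := hcov' 0; exact ⟨r, hr⟩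
  set B := hRfin.toFinset with hB
  have hBne : B.Nonempty :=
    ⟨hRne.choose, (Set.Finite.mem_toFinset _).mpr hRne.choose_spec⟩
  set M : ℝ := B.sup' hBne (fun r => |r|) with hM
  have hM0 : 0 ≤ M :=
    le_trans (abs_nonneg hBne.choose) (Finset.le_sup' _ hBne.choose_spec)
  refine ⟨2*M + 1, by linarith, fun a => ?_⟩
  obtain ⟨r, hrR, hdr⟩ := hcov' (a + M)
  have hrB : r ∈ B := by rwa [hB, Set.Finite.mem_toFinset]
  have hrM : |r| ≤ M := Finset.le_sup' _ hrB
  refine ⟨a + M - r, ?_, ?_⟩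
  · constructor
    · have := abs_le.mp hrM; linarith [this.2]
    · have := abs_le.mp hrM; linarith [this.1]
  · intro x hx
    have coord : dist (φ (a+M) ⟨x, hx⟩) (φ r ⟨x, hx⟩) < δ/2 :=
      lt_of_le_of_lt (dist_le_pi_dist _ _ _) hdr
    have : ‖e (a+M) x - e r x‖ < δ/2 := by
      simpa [hφ, Complex.dist_eq] using coord
    calc ‖e (a + M - r) x - 1‖
        = ‖e (a+M) x - e r x‖ := (e_sub_e (a+M) r x).symm
      _ ≤ δ := by linarith

lemma abs_e_sub_one_le {h x : ℝ} (hb : |h| * |x| ≤ 1) :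
    ‖e h x - 1‖ ≤ 2 * (|h| * |x|) := by
  have habs : ‖↑h * ↑x * Complex.I‖ = |h| * |x| := by
    simp
  have := Complex.norm_exp_sub_one_le (x := ↑h * ↑x * Complex.I) (by rw [habs]; exact hb)
  rwa [habs] at this

lemma interval_ap (s : Finset ℝ) {δ : ℝ} (hδ : 0 < δ) :
    ∃ S : ℝ, 0 < S ∧ ∃ η : ℝ, 0 < η ∧ ∀ a : ℝ, ∃ τ ∈ Set.Icc a (a + S),
      ∀ τ' ∈ Set.Icc τ (τ + η), ∀ x ∈ s, ‖e τ' x - 1‖ ≤ δ := by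
  set δ' := min δ 1 with hδ'
  have hδ'0 : 0 < δ' := lt_min hδ one_pos
  have hδ'1 : δ' ≤ 1 := min_le_right _ _
  have hδ'δ : δ' ≤ δ := min_le_left _ _
  set X : ℝ := 1 + ∑ x ∈ s, |x| with hX
  have hX1 : 1 ≤ X := by
    rw [hX]; nlinarith [Finset.sum_nonneg (fun x (_ : x ∈ s) => abs_nonneg x)]
  have hXx : ∀ x ∈ s, |x| ≤ X := by
    intro x hx
    rw [hX]
    have := Finset.single_le_sum (fun y (_ : y ∈ s) => abs_nonneg y) hx
    linarith
  obtain ⟨S, hS, hnet⟩ := net_lemma s (half_pos hδ'0)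
  refine ⟨S, hS, δ' / (4 * X), by positivity, fun a => ?_⟩
  obtain ⟨τ, hτ, hap⟩ := hnet a
  refine ⟨τ, hτ, fun τ' hτ' x hx => ?_⟩
  have hd : |τ' - τ| ≤ δ' / (4 * X) := by
    rw [_root_.abs_of_nonneg (by linarith [hτ'.1] : (0:ℝ) ≤ τ' - τ)]
    linarith [hτ'.2]
  have hdx : |τ' - τ| * |x| ≤ δ' / 4 := by
    calc |τ' - τ| * |x| ≤ (δ' / (4 * X)) * X :=
          mul_le_mul hd (hXx x hx) (abs_nonneg x) (by positivity)
      _ = δ' / 4 := by field_simp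
  have h1 : ‖e τ' x - e τ x‖ ≤ δ' / 2 := by
    rw [e_sub_e]
    calc ‖e (τ' - τ) x - 1‖ ≤ 2 * (|τ' - τ| * |x|) :=
          abs_e_sub_one_le (le_trans hdx (by linarith))
      _ ≤ δ' / 2 := by linarith
  calc ‖e τ' x - 1‖
      ≤ ‖e τ' x - e τ x‖ + ‖e τ x - 1‖ := by
        have := norm_add_le (e τ' x - e τ x) (e τ x - 1)
        simpa using this
    _ ≤ δ' / 2 + δ' / 2 := add_le_add h1 (hap x hx)
    _ ≤ δ := by linarith

lemma tail_small (μ : Measure ℝ) [IsFiniteMeasure μ] {D : Set ℝ} (hD : D.Countable)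
    {δ : ℝ} (hδ : 0 < δ) :
    ∃ F : Finset ℝ, ↑F ⊆ D ∧ (μ (D \ ↑F)).toReal ≤ δ := by
  classical
  rcases D.eq_empty_or_nonempty with hemp | hne
  · exact ⟨∅, by simp, by simp [hemp, hδ.le]⟩
  obtain ⟨f, hf⟩ := Set.Countable.exists_eq_range hD hne
  set s : ℕ → Set ℝ := fun n => D \ ↑((Finset.range n).image f) with hs
  have hmeas : ∀ n, NullMeasurableSet (s n) μ := fun n =>
    ((hD.measurableSet).diff (Finset.measurableSet _)).nullMeasurableSet
  have hanti : Antitone s := by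
    intro n m hnm
    apply Set.diff_subset_diff_right
    intro x hx
    simp only [Finset.coe_image, Finset.coe_range] at hx ⊢
    obtain ⟨k, hk, rfl⟩ := hx
    exact ⟨k, lt_of_lt_of_le hk hnm, rfl⟩
  have hint : ⋂ n, s n = ∅ := by
    ext x
    simp only [Set.mem_iInter, Set.mem_empty_iff_false, iff_false, not_forall]
    by_cases hx : x ∈ D
    · rw [hf] at hx
      obtain ⟨k, rfl⟩ := hx
      refine ⟨k+1, fun hmem => hmem.2 ?_⟩
      simp only [Finset.coe_image, Finset.coe_range]
      exact ⟨k, Nat.lt_succ_self k, rfl⟩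
    · exact ⟨0, fun hmem => hx hmem.1⟩
  have htend : Tendsto (μ ∘ s) atTop (nhds 0) := by
    have := tendsto_measure_iInter_atTop (μ := μ) hmeas hanti ⟨0, measure_ne_top μ _⟩
    rwa [hint, measure_empty] at this
  have : ∀ᶠ n in atTop, μ (s n) < ENNReal.ofReal δ :=
    htend.eventually (gt_mem_nhds (by simp [hδ]))
  obtain ⟨n, hn⟩ := this.exists
  refine ⟨((Finset.range n).image f).filter (· ∈ D), ?_, ?_⟩
  · intro x hx
    simp only [Finset.coe_filter, Set.mem_setOf_eq] at hx
    exact hx.2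
  · have hsub : D \ ↑(((Finset.range n).image f).filter (· ∈ D)) ⊆ s n := by
      intro x hx
      refine ⟨hx.1, fun hmem => hx.2 ?_⟩
      simp only [Finset.coe_filter, Set.mem_setOf_eq]
      exact ⟨hmem, hx.1⟩
    calc (μ (D \ ↑(((Finset.range n).image f).filter (· ∈ D)))).toReal
        ≤ (μ (s n)).toReal := ENNReal.toReal_mono (measure_ne_top μ _) (measure_mono hsub)
      _ ≤ δ := ENNReal.toReal_le_of_le_ofReal hδ.le hn.le

lemma sum_toReal_le_one (μ : Measure ℝ) [IsProbabilityMeasure μ] (F : Finset ℝ) :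
    ∑ x ∈ F, (μ {x}).toReal ≤ 1 := by
  classical
  have h1 : ∑ x ∈ F, μ {x} = μ (⋃ x ∈ F, {x}) := by
    rw [measure_biUnion_finset ?_ (fun x _ => measurableSet_singleton x)]
    intro x _ y _ hxy
    simp [Set.disjoint_singleton, hxy]
  have h2 : (⋃ x ∈ F, {x} : Set ℝ) = ↑F := by ext x; simp
  have h3 : ∑ x ∈ F, (μ {x}).toReal = (μ ↑F).toReal := by
    rw [← ENNReal.toReal_sum (fun x _ => measure_ne_top μ _), h1, h2]
  rw [h3]
  have : μ ↑F ≤ 1 := prob_le_one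
  exact ENNReal.toReal_mono ENNReal.one_ne_top this |>.trans (by simp)

lemma g_diff (μ : Measure ℝ) [IsProbabilityMeasure μ] {D : Set ℝ} (hDm : MeasurableSet D)
    (F : Finset ℝ) (hF : ↑F ⊆ D) (u v : ℝ) {δ : ℝ} (hδ : 0 ≤ δ)
    (hap : ∀ x ∈ F, ‖e (u - v) x - 1‖ ≤ δ) :
    ‖ecf (μ.restrict D) u - ecf (μ.restrict D) v‖ ≤ δ + 2 * (μ (D \ ↑F)).toReal := by
  classical
  have hFm : MeasurableSet (↑F : Set ℝ) := Finset.measurableSet F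
  have hDFm : MeasurableSet (D \ ↑F) := hDm.diff hFm
  have hsplit : ∀ w : ℝ, ecf (μ.restrict D) w
      = (∑ x ∈ F, (μ {x}).toReal • e w x) + ∫ x in D \ ↑F, e w x ∂μ := by
    intro w
    have hD : D = ↑F ∪ (D \ ↑F) := (Set.union_diff_cancel hF).symm
    have : ecf (μ.restrict D) w = ∫ x in (↑F ∪ (D \ ↑F) : Set ℝ), e w x ∂μ := by
      rw [ecf, ← hD]
    rw [this, setIntegral_union Set.disjoint_sdiff_right hDFm
      ((integrable_e μ w).integrableOn) ((integrable_e μ w).integrableOn)]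
    congr 1
    exact integral_finset F ((integrable_e μ w).integrableOn)
  rw [hsplit u, hsplit v]
  have hre : (∑ x ∈ F, (μ {x}).toReal • e u x) + (∫ x in D \ ↑F, e u x ∂μ)
      - ((∑ x ∈ F, (μ {x}).toReal • e v x) + ∫ x in D \ ↑F, e v x ∂μ)
      = (∑ x ∈ F, (μ {x}).toReal • (e u x - e v x))
        + ((∫ x in D \ ↑F, e u x ∂μ) - ∫ x in D \ ↑F, e v x ∂μ) := by
    rw [Finset.sum_congr rfl (fun x _ => smul_sub ((μ {x}).toReal) (e u x) (e v x)),
      Finset.sum_sub_distrib]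
    ring
  rw [hre]
  have hsum : ‖∑ x ∈ F, (μ {x}).toReal • (e u x - e v x)‖ ≤ δ := by
    calc ‖∑ x ∈ F, (μ {x}).toReal • (e u x - e v x)‖
        ≤ ∑ x ∈ F, ‖(μ {x}).toReal • (e u x - e v x)‖ := norm_sum_le _ _
      _ ≤ ∑ x ∈ F, (μ {x}).toReal * δ := by
          apply Finset.sum_le_sum; intro x hx
          rw [norm_smul, Real.norm_of_nonneg ENNReal.toReal_nonneg]
          have hexv : ‖e u x - e v x‖ ≤ δ := by
            rw [e_sub_e]; exact hap x hx
          exact mul_le_mul_of_nonneg_left hexv ENNReal.toReal_nonneg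
      _ = (∑ x ∈ F, (μ {x}).toReal) * δ := by rw [Finset.sum_mul]
      _ ≤ 1 * δ := mul_le_mul_of_nonneg_right (sum_toReal_le_one μ F) hδ
      _ = δ := one_mul δ
  have hB : ∀ w : ℝ, ‖∫ x in D \ ↑F, e w x ∂μ‖ ≤ (μ (D \ ↑F)).toReal := by
    intro w
    have := norm_setIntegral_le_of_norm_le_const (μ := μ) (s := D \ ↑F) (C := 1) (f := e w)
      (measure_lt_top μ _) (fun x _ => by rw [norm_e])
    exact this.trans (le_of_eq (one_mul _))
  calc ‖(∑ x ∈ F, (μ {x}).toReal • (e u x - e v x))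
        + ((∫ x in D \ ↑F, e u x ∂μ) - ∫ x in D \ ↑F, e v x ∂μ)‖
      ≤ ‖∑ x ∈ F, (μ {x}).toReal • (e u x - e v x)‖
        + ‖(∫ x in D \ ↑F, e u x ∂μ) - ∫ x in D \ ↑F, e v x ∂μ‖ := norm_add_le _ _
    _ ≤ δ + (‖∫ x in D \ ↑F, e u x ∂μ‖ + ‖∫ x in D \ ↑F, e v x ∂μ‖) :=
        add_le_add hsum (norm_sub_le _ _)
    _ ≤ δ + ((μ (D \ ↑F)).toReal + (μ (D \ ↑F)).toReal) :=
        add_le_add (le_refl δ) (add_le_add (hB u) (hB v))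
    _ = δ + 2 * (μ (D \ ↑F)).toReal := by ring

end CharFnSep

open CharFnSep

/-- If the characteristic function of a probability measure `μ` on `ℝ` is
separated from zero, then so is the Fourier transform of its discrete part
`t ↦ ∫_D exp(itx) dμ(x)`, where `D` is the set of atoms of `μ`. -/
theorem charFn_sep_from_zero_imp_discretePart_sep_from_zero
    (μ : Measure ℝ) [IsProbabilityMeasure μ]
    (hsep : ∃ ε : ℝ, 0 < ε ∧ ∀ t : ℝ, ε ≤ ‖charFn μ t‖) :
    ∃ ε' : ℝ, 0 < ε' ∧ ∀ t : ℝ,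
      ε' ≤ ‖∫ x in {x : ℝ | 0 < μ {x}}, Complex.exp (t * x * Complex.I) ∂μ‖ := by
  classical
  obtain ⟨ε, hε, hsepf⟩ := hsep
  set D := {x : ℝ | 0 < μ {x}} with hDdef
  have hDc : D.Countable := by
    have hcnt := Measure.countable_meas_level_set_pos (μ := μ) (measurable_id (α := ℝ))
    have hss : ∀ t : ℝ, {a : ℝ | id a = t} = {t} := by
      intro t; ext a; simp
    simp only [hss] at hcnt
    exact hcnt
  have hDm : MeasurableSet D := hDc.measurableSet
  set ν := μ.restrict Dᶜ with hνdef
  haveI : IsFiniteMeasure ν := by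
    constructor
    rw [hνdef, Measure.restrict_apply_univ]
    exact measure_lt_top μ _
  have hν0 : ∀ x : ℝ, ν {x} = 0 := by
    intro x
    rw [hνdef, Measure.restrict_apply (measurableSet_singleton x)]
    by_cases hx : x ∈ D
    · have hempty : ({x} : Set ℝ) ∩ Dᶜ = ∅ := by
        rw [Set.singleton_inter_eq_empty]
        simpa using hx
      rw [hempty, measure_empty]
    · have hx0 : μ {x} = 0 := by
        by_contra h0
        exact hx (by simpa [hDdef] using pos_iff_ne_zero.mpr h0)
      exact measure_mono_null Set.inter_subset_left hx0
  set g : ℝ → ℂ := ecf (μ.restrict D) with hg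
  set h : ℝ → ℂ := ecf ν with hh
  have hsplit : ∀ u : ℝ, charFn μ u = g u + h u := by
    intro u
    rw [hg, hh, hνdef]
    exact (integral_add_compl hDm (integrable_e μ u)).symm
  refine ⟨ε/2, by positivity, fun t => ?_⟩
  show ε / 2 ≤ ‖g t‖
  obtain ⟨F, hFD, hFtail⟩ := tail_small μ hDc (show (0:ℝ) < ε/16 by positivity)
  obtain ⟨S, hS, η, hη, hnet2⟩ := interval_ap F (show (0:ℝ) < ε/16 by positivity)
  have hw := wiener ν hν0 t
  set κ := (ε/4)^2 * η / (2*(S+η)) with hκdef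
  have hκ : 0 < κ := by positivity
  have hev : ∀ᶠ T in Filter.atTop,
      (∫ τ in Set.Ioc (0:ℝ) T, Complex.normSq (h (t+τ))) / T < κ :=
    hw.eventually (gt_mem_nhds hκ)
  obtain ⟨T₀, hT₀⟩ := Filter.eventually_atTop.mp hev
  set N : ℕ := max 1 ⌈T₀/(S+η)⌉₊ with hN
  have hN1 : 1 ≤ N := le_max_left _ _
  have hN0 : (1:ℝ) ≤ (N:ℝ) := by exact_mod_cast hN1
  set T := (N:ℝ)*(S+η) with hT
  have hTpos : 0 < T := by nlinarith
  have hTT₀ : T₀ ≤ T := by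
    have h1 : T₀/(S+η) ≤ (⌈T₀/(S+η)⌉₊ : ℝ) := Nat.le_ceil _
    have h2 : ((⌈T₀/(S+η)⌉₊ : ℕ) : ℝ) ≤ (N:ℝ) := by exact_mod_cast le_max_right 1 _
    have hSη : 0 < S + η := by linarith
    calc T₀ = (T₀/(S+η))*(S+η) := by field_simp
      _ ≤ (N:ℝ)*(S+η) := by nlinarith
  choose τf hτmem hτap using fun k : ℕ => hnet2 ((k:ℝ)*(S+η))
  set J : ℕ → Set ℝ := fun k => Set.Ioc (τf k) (τf k + η) with hJ
  have hJsub : ∀ k : ℕ, J k ⊆ Set.Ioc ((k:ℝ)*(S+η)) (((k:ℝ)+1)*(S+η)) := by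
    intro k x hx
    have h1 := (hτmem k).1
    have h2 := (hτmem k).2
    exact ⟨lt_of_le_of_lt h1 hx.1, hx.2.trans (by nlinarith)⟩
  have hexτ : ∃ τ : ℝ, (∀ x ∈ F, ‖e τ x - 1‖ ≤ ε/16)
      ∧ ‖h (t+τ)‖ ≤ ε/4 := by
    by_contra hcon
    push_neg at hcon
    have hlow : ∀ k : ℕ, ∀ τ ∈ J k, (ε/4)^2 ≤ Complex.normSq (h (t+τ)) := by
      intro k τ hτ
      have hτ' : τ ∈ Set.Icc (τf k) (τf k + η) := ⟨hτ.1.le, hτ.2⟩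
      have hgt := hcon τ (fun x hx => hτap k τ hτ' x hx)
      have habs := Complex.sq_norm (h (t+τ))
      nlinarith [norm_nonneg (h (t+τ))]
    haveI : IsFiniteMeasure (volume.restrict (Set.Ioc (0:ℝ) T)) := by
      constructor
      rw [Measure.restrict_apply_univ, Real.volume_Ioc]
      exact ENNReal.ofReal_lt_top
    have hint : IntegrableOn (fun τ => Complex.normSq (h (t+τ))) (Set.Ioc 0 T) volume := by
      apply (integrable_const ((ν Set.univ).toReal^2)).mono'
      · apply Continuous.aestronglyMeasurable
        exact Complex.continuous_normSq.comp
          ((continuous_ecf ν).comp (continuous_const.add continuous_id))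
      · filter_upwards with τ
        rw [Real.norm_eq_abs, _root_.abs_of_nonneg (Complex.normSq_nonneg _), ← Complex.sq_norm]
        have hb1 : ‖h (t+τ)‖ ≤ (ν Set.univ).toReal := norm_ecf_le ν _
        have hb0 : 0 ≤ ‖h (t+τ)‖ := norm_nonneg _
        nlinarith
    have hJm : ∀ k : ℕ, MeasurableSet (J k) := fun k => measurableSet_Ioc
    have hJfin : ∀ k : ℕ, volume (J k) ≠ ⊤ := by
      intro k; rw [hJ]; simp only [Real.volume_Ioc]; exact ENNReal.ofReal_ne_top
    have hJvol : ∀ k : ℕ, (volume (J k)).toReal = η := by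
      intro k
      rw [hJ]
      simp only [Real.volume_Ioc, add_sub_cancel_left]
      exact ENNReal.toReal_ofReal hη.le
    have hJT : ∀ k, k < N → J k ⊆ Set.Ioc (0:ℝ) T := by
      intro k hk
      refine (hJsub k).trans (Set.Ioc_subset_Ioc ?_ ?_)
      · positivity
      · have hkN : (k:ℝ)+1 ≤ (N:ℝ) := by exact_mod_cast Nat.succ_le_of_lt hk
        rw [hT]
        nlinarith
    have hge : ∀ k, k < N → (ε/4)^2 * η ≤ ∫ τ in J k, Complex.normSq (h (t+τ)) := by
      intro k hk
      have := setIntegral_ge_of_const_le (hJm k) (hJfin k) (fun τ hτ => hlow k τ hτ)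
        (hint.mono_set (hJT k hk))
      rw [show volume.real (J k) = η from hJvol k, smul_eq_mul] at this
      linarith
    have hdisj : (↑(Finset.range N) : Set ℕ).PairwiseDisjoint J := by
      have key : ∀ {i j : ℕ}, i < j →
          Disjoint (Set.Ioc ((i:ℝ)*(S+η)) (((i:ℝ)+1)*(S+η)))
            (Set.Ioc ((j:ℝ)*(S+η)) (((j:ℝ)+1)*(S+η))) := by
        intro i j hij
        rw [Set.Ioc_disjoint_Ioc]
        have h1 : ((i:ℝ)+1) ≤ (j:ℝ) := by exact_mod_cast hij
        have h2 : ((i:ℝ)+1)*(S+η) ≤ (j:ℝ)*(S+η) := by nlinarith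
        exact le_trans (min_le_left _ _) (le_trans h2 (le_max_right _ _))
      intro i _ j _ hij
      rcases lt_or_gt_of_ne hij with hlt | hgt
      · exact Set.disjoint_of_subset (hJsub i) (hJsub j) (key hlt)
      · exact Set.disjoint_of_subset (hJsub i) (hJsub j) (key hgt).symm
    have hU : ∫ τ in (⋃ k ∈ Finset.range N, J k), Complex.normSq (h (t+τ))
        = ∑ k ∈ Finset.range N, ∫ τ in J k, Complex.normSq (h (t+τ)) :=
      integral_biUnion_finset (Finset.range N) (fun k _ => hJm k) hdisj
        (fun k hk => hint.mono_set (hJT k (Finset.mem_range.mp hk)))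
    have hUsub : (⋃ k ∈ Finset.range N, J k) ⊆ Set.Ioc (0:ℝ) T := by
      intro x hx
      obtain ⟨k, hk, hxk⟩ := Set.mem_iUnion₂.mp hx
      exact hJT k (Finset.mem_range.mp hk) hxk
    have hsum : (N:ℝ) * ((ε/4)^2 * η) ≤ ∫ τ in Set.Ioc (0:ℝ) T, Complex.normSq (h (t+τ)) := by
      calc (N:ℝ) * ((ε/4)^2 * η) = ∑ _k ∈ Finset.range N, (ε/4)^2 * η := by
            rw [Finset.sum_const, Finset.card_range, nsmul_eq_mul]
        _ ≤ ∑ k ∈ Finset.range N, ∫ τ in J k, Complex.normSq (h (t+τ)) :=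
            Finset.sum_le_sum (fun k hk => hge k (Finset.mem_range.mp hk))
        _ = ∫ τ in (⋃ k ∈ Finset.range N, J k), Complex.normSq (h (t+τ)) := hU.symm
        _ ≤ ∫ τ in Set.Ioc (0:ℝ) T, Complex.normSq (h (t+τ)) := by
            apply setIntegral_mono_set hint ?_ (HasSubset.Subset.eventuallyLE hUsub)
            filter_upwards with τ using Complex.normSq_nonneg _
    have hup := hT₀ T hTT₀
    rw [div_lt_iff₀ hTpos] at hup
    have hκT : κ * T = (N:ℝ)*((ε/4)^2 * η)/2 := by
      rw [hκdef, hT]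
      have hSη : S + η ≠ 0 := by positivity
      field_simp
    have hposN : 0 < (N:ℝ)*((ε/4)^2*η) := by positivity
    linarith [hsum, hup]
  obtain ⟨τ, hτap', hτh⟩ := hexτ
  have h1 : ε ≤ ‖charFn μ (t+τ)‖ := hsepf (t+τ)
  have h2 : ε - ε/4 ≤ ‖g (t+τ)‖ := by
    have hs := hsplit (t+τ)
    have htri : ‖charFn μ (t+τ)‖ ≤ ‖g (t+τ)‖ + ‖h (t+τ)‖ := by
      rw [hs]; exact norm_add_le _ _
    linarith
  have h3 : ‖g (t+τ) - g t‖ ≤ ε/16 + 2*(μ (D \ ↑F)).toReal := by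
    apply g_diff μ hDm F hFD (t+τ) t (by positivity)
    intro x hx
    rw [show t + τ - t = τ by ring]
    exact hτap' x hx
  have h4 : ‖g (t+τ)‖ - ‖g t‖ ≤ ‖g (t+τ) - g t‖ := by
    exact norm_sub_norm_le (g (t+τ)) (g t)
  linarith [hFtail]
end

section
/- Let μ be a rational-infinitely divisible probability measure on ℝ with characteristic function f(t) = ∫ exp(itx) dμ(x). Then there exist constants B ≥ 0 and C > 0 such that |f(t−h)·f(t+h)| ≤ C·exp(B·h²)·|f(t)|² for all t ∈ ℝ and all h ∈ ℝ. -/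
open MeasureTheory Complex

/-- `n`-fold (additive) convolution power of a measure on `ℝ`. -/
noncomputable def convPow (ρ : Measure ℝ) : ℕ → Measure ℝ
  | 0 => Measure.dirac 0
  | n + 1 => Measure.conv (convPow ρ n) ρ

/-- A probability measure `ν` on `ℝ` is infinitely divisible if for every `n ≥ 1`
there is a probability measure `ρ` with `ν = ρ^{*n}`. -/
def IsInfinitelyDivisible (ν : Measure ℝ) : Prop :=
  IsProbabilityMeasure ν ∧
    ∀ n : ℕ, 0 < n → ∃ ρ : Measure ℝ, IsProbabilityMeasure ρ ∧ ν = convPow ρ n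

/-- A probability measure `μ` on `ℝ` is rational-infinitely divisible if there are
infinitely divisible probability measures `μ₁, μ₂` with `μ₁ = μ ∗ μ₂`. -/
def IsRationalInfinitelyDivisible (μ : Measure ℝ) : Prop :=
  ∃ μ₁ μ₂ : Measure ℝ, IsInfinitelyDivisible μ₁ ∧ IsInfinitelyDivisible μ₂ ∧
    μ₁ = Measure.conv μ μ₂



lemma abs_cexp_ti (t x : ℝ) : ‖Complex.exp ((t:ℂ) * x * Complex.I)‖ = 1 := by
  rw [Complex.norm_exp]
  have : ((t:ℂ) * x * Complex.I).re = 0 := by simp [Complex.mul_I_re, ← Complex.ofReal_mul]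
  rw [this, Real.exp_zero]

lemma measurable_cexp_ti (t : ℝ) :
    Continuous (fun x : ℝ => Complex.exp ((t:ℂ) * x * Complex.I)) := by continuity

lemma integrable_cexp (μ : Measure ℝ) [IsFiniteMeasure μ] (t : ℝ) :
    Integrable (fun x : ℝ => Complex.exp ((t:ℂ) * x * Complex.I)) μ := by
  apply Integrable.mono' (integrable_const (1:ℝ))
  · exact (measurable_cexp_ti t).aestronglyMeasurable
  · filter_upwards with x
    rw [abs_cexp_ti]

lemma abs_charFn_le_one (μ : Measure ℝ) [IsProbabilityMeasure μ] (t : ℝ) :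
    ‖charFn μ t‖ ≤ 1 := by
  calc ‖charFn μ t‖ ≤ ∫ x, ‖Complex.exp ((t:ℂ) * x * Complex.I)‖ ∂μ :=
        norm_integral_le_integral_norm _
  _ ≤ 1 := by
      simp only [abs_cexp_ti]
      simp

lemma charFn_conv (μ ν : Measure ℝ) [IsProbabilityMeasure μ] [IsProbabilityMeasure ν] (t : ℝ) :
    charFn (μ.conv ν) t = charFn μ t * charFn ν t := by
  rw [charFn, Measure.conv,
    integral_map (by fun_prop) ((measurable_cexp_ti t).aestronglyMeasurable)]
  rw [charFn, charFn, ← MeasureTheory.integral_prod_mul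
    (fun x : ℝ => Complex.exp ((t:ℂ) * x * Complex.I))
    (fun y : ℝ => Complex.exp ((t:ℂ) * y * Complex.I))]
  congr 1
  ext p
  rw [← Complex.exp_add]
  congr 1
  push_cast
  ring

lemma charFn_map_neg (μ : Measure ℝ) [IsProbabilityMeasure μ] (t : ℝ) :
    charFn (μ.map Neg.neg) t = (starRingEnd ℂ) (charFn μ t) := by
  rw [charFn, integral_map (by fun_prop) ((measurable_cexp_ti t).aestronglyMeasurable), charFn,
    ← integral_conj]
  congr 1
  ext x
  rw [← Complex.exp_conj]
  congr 1
  simp [Complex.conj_I]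


instance convPow_prob (ρ : Measure ℝ) [IsProbabilityMeasure ρ] (n : ℕ) :
    IsProbabilityMeasure (convPow ρ n) := by
  induction n with
  | zero => rw [convPow]; infer_instance
  | succ n ih => rw [convPow]; infer_instance

lemma charFn_dirac_zero (t : ℝ) : charFn (Measure.dirac (0:ℝ)) t = 1 := by
  rw [charFn, integral_dirac]
  simp

lemma charFn_convPow (ρ : Measure ℝ) [IsProbabilityMeasure ρ] (n : ℕ) (t : ℝ) :
    charFn (convPow ρ n) t = (charFn ρ t) ^ n := by
  induction n with
  | zero => rw [convPow, charFn_dirac_zero]; simp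
  | succ n ih => rw [convPow, charFn_conv, ih, pow_succ]

/-- symmetrization of a measure -/
noncomputable def symMeas (ρ : Measure ℝ) : Measure ℝ := ρ.conv (ρ.map Neg.neg)

instance symMeas_prob (ρ : Measure ℝ) [IsProbabilityMeasure ρ] : IsProbabilityMeasure (symMeas ρ) := by
  rw [symMeas]
  have : IsProbabilityMeasure (ρ.map Neg.neg) :=
    Measure.isProbabilityMeasure_map (measurable_neg.aemeasurable)
  infer_instance

lemma charFn_symMeas (ρ : Measure ℝ) [IsProbabilityMeasure ρ] (t : ℝ) :
    charFn (symMeas ρ) t = ((‖charFn ρ t‖ ^ 2 : ℝ) : ℂ) := by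
  have : IsProbabilityMeasure (ρ.map Neg.neg) :=
    Measure.isProbabilityMeasure_map (measurable_neg.aemeasurable)
  rw [symMeas, charFn_conv, charFn_map_neg, Complex.mul_conj]
  rw [Complex.normSq_eq_norm_sq]

/-- integral of cos -/
noncomputable def cosInt (ν : Measure ℝ) (t : ℝ) : ℝ := ∫ x, Real.cos (t * x) ∂ν

lemma integrable_cos_mul (ν : Measure ℝ) [IsFiniteMeasure ν] (t : ℝ) :
    Integrable (fun x : ℝ => Real.cos (t * x)) ν := by
  apply Integrable.mono' (integrable_const (1:ℝ))
  · exact (Real.continuous_cos.comp (continuous_const.mul continuous_id)).aestronglyMeasurable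
  · filter_upwards with x
    rw [Real.norm_eq_abs]
    exact Real.abs_cos_le_one _

lemma cosInt_eq_abs_sq (ρ : Measure ℝ) [IsProbabilityMeasure ρ] (t : ℝ) :
    cosInt (symMeas ρ) t = ‖charFn ρ t‖ ^ 2 := by
  have h1 : cosInt (symMeas ρ) t = (charFn (symMeas ρ) t).re := by
    rw [charFn, ← RCLike.re_to_complex, ← integral_re (integrable_cexp _ t), cosInt]
    congr 1
    ext x
    rw [RCLike.re_to_complex]
    have : ((t:ℂ) * x * Complex.I) = ((t * x : ℝ) : ℂ) * Complex.I := by push_cast; ring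
    rw [this, Complex.exp_ofReal_mul_I_re]
  rw [h1, charFn_symMeas]
  exact Complex.ofReal_re _

lemma continuous_charFn (μ : Measure ℝ) [IsProbabilityMeasure μ] :
    Continuous (fun t => charFn μ t) := by
  show Continuous fun t : ℝ => ∫ x : ℝ, Complex.exp ((t:ℂ) * x * Complex.I) ∂μ
  apply MeasureTheory.continuous_of_dominated
    (bound := fun _ : ℝ => (1:ℝ))
    (F := fun (t : ℝ) (x : ℝ) => Complex.exp ((t:ℂ) * x * Complex.I))
  · exact fun t => (measurable_cexp_ti t).aestronglyMeasurable
  · intro t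
    filter_upwards with x
    rw [abs_cexp_ti]
  · exact integrable_const 1
  · filter_upwards with x
    continuity

lemma continuous_cosInt (ν : Measure ℝ) [IsProbabilityMeasure ν] :
    Continuous (fun t => cosInt ν t) := by
  show Continuous fun t : ℝ => ∫ x : ℝ, Real.cos (t * x) ∂ν
  apply MeasureTheory.continuous_of_dominated
    (bound := fun _ : ℝ => (1:ℝ))
    (F := fun t (x : ℝ) => Real.cos (t * x))
  · exact fun t => ((Real.continuous_cos.comp
      (continuous_const.mul continuous_id)).aestronglyMeasurable)
  · intro t
    filter_upwards with x
    rw [Real.norm_eq_abs]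
    exact Real.abs_cos_le_one _
  · exact integrable_const 1
  · filter_upwards with x
    continuity

lemma cosInt_le_one (ν : Measure ℝ) [IsProbabilityMeasure ν] (t : ℝ) : cosInt ν t ≤ 1 := by
  rw [cosInt]
  calc ∫ x, Real.cos (t * x) ∂ν ≤ ∫ _, (1:ℝ) ∂ν :=
        integral_mono (integrable_cos_mul ν t) (integrable_const 1) (fun x => Real.cos_le_one _)
  _ = 1 := by simp

/-- one minus cosInt as an integral -/
lemma one_sub_cosInt (ν : Measure ℝ) [IsProbabilityMeasure ν] (t : ℝ) :
    1 - cosInt ν t = ∫ x, (1 - Real.cos (t * x)) ∂ν := by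
  rw [integral_sub (integrable_const 1) (integrable_cos_mul ν t)]
  simp [cosInt]

/-- the set of small x -/
def Sball : Set ℝ := {x : ℝ | |x| ≤ 1}

lemma measurableSet_Sball : MeasurableSet Sball :=
  (isClosed_le (_root_.continuous_abs) continuous_const).measurableSet

lemma abs_int_le (ν : Measure ℝ) (f : ℝ → ℝ) : |∫ x, f x ∂ν| ≤ ∫ x, |f x| ∂ν := by
  simpa [Real.norm_eq_abs] using norm_integral_le_integral_norm (μ := ν) f

lemma integrable_sq_Sball (ν : Measure ℝ) [IsProbabilityMeasure ν] :
    Integrable (fun x : ℝ => x ^ 2) (ν.restrict Sball) := by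
  apply Integrable.mono' (integrable_const (1:ℝ))
  · exact (continuous_pow 2).aestronglyMeasurable
  · rw [ae_restrict_iff' measurableSet_Sball]
    filter_upwards with x hx
    rw [Real.norm_eq_abs, _root_.abs_of_nonneg (sq_nonneg x)]
    calc x^2 = |x|^2 := (_root_.sq_abs x).symm
    _ ≤ 1^2 := by
        apply pow_le_pow_left₀ (abs_nonneg x) hx
    _ = 1 := one_pow 2

lemma integrable_one_sub_cos (ν : Measure ℝ) [IsProbabilityMeasure ν] (h : ℝ) :
    Integrable (fun x : ℝ => 1 - Real.cos (h * x)) ν :=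
  (integrable_const 1).sub (integrable_cos_mul ν h)

lemma cosInt_combo_bound (ν : Measure ℝ) [IsProbabilityMeasure ν] (t h : ℝ) :
    |cosInt ν (t + h) + cosInt ν (t - h) - 2 * cosInt ν t| ≤ 2 * (1 - cosInt ν h) := by
  have key : ∀ x : ℝ, Real.cos ((t+h)*x) + Real.cos ((t-h)*x) - 2*Real.cos (t*x)
      = 2*(Real.cos (t*x)*(Real.cos (h*x)-1)) := by
    intro x
    have e1 : (t+h)*x = t*x + h*x := by ring
    have e2 : (t-h)*x = t*x - h*x := by ring
    rw [e1, e2, Real.cos_add, Real.cos_sub]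
    ring
  have hprod : Integrable (fun x : ℝ => Real.cos (t*x)*(Real.cos (h*x)-1)) ν := by
    apply Integrable.mono' (integrable_const (2:ℝ))
    · apply Continuous.aestronglyMeasurable
      continuity
    · filter_upwards with x
      rw [Real.norm_eq_abs, _root_.abs_mul]
      have b1 : |Real.cos (t*x)| ≤ 1 := Real.abs_cos_le_one _
      have b2 : |Real.cos (h*x) - 1| ≤ 2 := by
        rw [_root_.abs_le]
        constructor <;> nlinarith [Real.cos_le_one (h*x), Real.neg_one_le_cos (h*x)]
      nlinarith [_root_.abs_nonneg (Real.cos (t*x)), _root_.abs_nonneg (Real.cos (h*x) - 1)]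
  have hInt : ∫ x, (Real.cos ((t+h)*x) + Real.cos ((t-h)*x) - 2*Real.cos (t*x)) ∂ν
      = cosInt ν (t + h) + cosInt ν (t - h) - 2 * cosInt ν t := by
    have hadd : Integrable (fun x : ℝ => Real.cos ((t+h)*x) + Real.cos ((t-h)*x)) ν :=
      (integrable_cos_mul ν (t+h)).add (integrable_cos_mul ν (t-h))
    rw [integral_sub hadd ((integrable_cos_mul ν t).const_mul 2),
      integral_add (integrable_cos_mul ν (t+h)) (integrable_cos_mul ν (t-h)),
      MeasureTheory.integral_const_mul]
    rfl
  rw [← hInt]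
  calc |∫ x, (Real.cos ((t+h)*x) + Real.cos ((t-h)*x) - 2*Real.cos (t*x)) ∂ν|
      ≤ ∫ x, |Real.cos ((t+h)*x) + Real.cos ((t-h)*x) - 2*Real.cos (t*x)| ∂ν := abs_int_le ν _
  _ ≤ ∫ x, 2 * (1 - Real.cos (h*x)) ∂ν := by
      apply integral_mono
      · have hadd : Integrable (fun x : ℝ => Real.cos ((t+h)*x) + Real.cos ((t-h)*x)) ν :=
          (integrable_cos_mul ν (t+h)).add (integrable_cos_mul ν (t-h))
        have : Integrable (fun x : ℝ => Real.cos ((t+h)*x) + Real.cos ((t-h)*x)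
            - 2*Real.cos (t*x)) ν := hadd.sub ((integrable_cos_mul ν t).const_mul 2)
        exact this.abs
      · exact (integrable_one_sub_cos ν h).const_mul 2
      · intro x
        dsimp only
        rw [key x, _root_.abs_mul, _root_.abs_mul]
        have h1 : |Real.cos (h*x) - 1| = 1 - Real.cos (h*x) := by
          rw [abs_sub_comm, _root_.abs_of_nonneg]
          linarith [Real.cos_le_one (h*x)]
        have h2 : |(2:ℝ)| = 2 := by norm_num
        rw [h1, h2]
        have b1 : |Real.cos (t*x)| ≤ 1 := Real.abs_cos_le_one _
        nlinarith [Real.cos_le_one (h*x), _root_.abs_nonneg (Real.cos (t*x))]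
  _ = 2 * (1 - cosInt ν h) := by rw [MeasureTheory.integral_const_mul, ← one_sub_cosInt]

lemma small_large_split (ν : Measure ℝ) [IsProbabilityMeasure ν] (h : ℝ) :
    1 - cosInt ν h ≤ h^2/2 * ∫ x in Sball, x^2 ∂ν + 2 * (ν Sballᶜ).toReal := by
  rw [one_sub_cosInt]
  rw [← integral_add_compl measurableSet_Sball (integrable_one_sub_cos ν h)]
  have h1 : ∫ x in Sball, (1 - Real.cos (h*x)) ∂ν ≤ h^2/2 * ∫ x in Sball, x^2 ∂ν := by
    rw [← MeasureTheory.integral_const_mul]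
    apply setIntegral_mono_on ((integrable_one_sub_cos ν h).restrict)
      ((integrable_sq_Sball ν).const_mul _) measurableSet_Sball
    intro x _
    have := Real.one_sub_sq_div_two_le_cos (x := h*x)
    nlinarith
  have h2 : ∫ x in Sballᶜ, (1 - Real.cos (h*x)) ∂ν ≤ 2 * (ν Sballᶜ).toReal := by
    calc ∫ x in Sballᶜ, (1 - Real.cos (h*x)) ∂ν ≤ ∫ _ in Sballᶜ, (2:ℝ) ∂ν := by
          apply setIntegral_mono_on ((integrable_one_sub_cos ν h).restrict)
            (integrable_const 2) measurableSet_Sball.compl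
          intro x _
          have := Real.neg_one_le_cos (h*x)
          linarith
    _ = 2 * (ν Sballᶜ).toReal := by
        rw [setIntegral_const]
        rw [smul_eq_mul, mul_comm]
        rfl
  linarith

lemma sq_small_bound (ν : Measure ℝ) [IsProbabilityMeasure ν] :
    2/Real.pi^2 * ∫ x in Sball, x^2 ∂ν ≤ 1 - cosInt ν 1 := by
  rw [one_sub_cosInt]
  calc 2/Real.pi^2 * ∫ x in Sball, x^2 ∂ν = ∫ x in Sball, 2/Real.pi^2 * x^2 ∂ν := by
        rw [MeasureTheory.integral_const_mul]
  _ ≤ ∫ x in Sball, (1 - Real.cos (1*x)) ∂ν := by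
      apply setIntegral_mono_on ((integrable_sq_Sball ν).const_mul _)
        ((integrable_one_sub_cos ν 1).restrict) measurableSet_Sball
      intro x hx
      have hxle : |x| ≤ Real.pi := le_trans hx (by linarith [Real.pi_gt_three])
      have := Real.cos_le_one_sub_mul_cos_sq hxle
      rw [one_mul]
      linarith
  _ ≤ ∫ x, (1 - Real.cos (1*x)) ∂ν := by
      apply setIntegral_le_integral (integrable_one_sub_cos ν 1)
      filter_upwards with x
      simp only [Pi.zero_apply]
      linarith [Real.cos_le_one (1*x)]

noncomputable def Gfun (x : ℝ) : ℝ := ∫ s in Set.Ioc (0:ℝ) 2, (1 - Real.cos (s * x))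

lemma Gfun_eq (x : ℝ) (hx : x ≠ 0) : Gfun x = 2 - Real.sin (2*x) / x := by
  rw [Gfun, ← intervalIntegral.integral_of_le (by norm_num : (0:ℝ) ≤ 2)]
  have hcont : Continuous fun s : ℝ => Real.cos (s * x) := by continuity
  rw [intervalIntegral.integral_sub (intervalIntegrable_const) (hcont.intervalIntegrable 0 2)]
  have hcomp : ∫ s in (0:ℝ)..2, Real.cos (s * x) = Real.sin (2*x) / x := by
    rw [intervalIntegral.integral_comp_mul_right Real.cos hx, integral_cos]
    simp only [zero_mul, Real.sin_zero, sub_zero, smul_eq_mul]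
    rw [inv_mul_eq_div]
  rw [hcomp]
  simp

lemma Gfun_nonneg (x : ℝ) : 0 ≤ Gfun x := by
  rw [Gfun]
  apply integral_nonneg
  intro s
  simp only [Pi.zero_apply]
  linarith [Real.cos_le_one (s * x)]

lemma Gfun_le (x : ℝ) : Gfun x ≤ 4 := by
  rw [Gfun]
  calc ∫ s in Set.Ioc (0:ℝ) 2, (1 - Real.cos (s * x))
      ≤ ∫ _ in Set.Ioc (0:ℝ) 2, (2:ℝ) := by
        apply setIntegral_mono_on ?_ (integrable_const 2) measurableSet_Ioc
        · intro s _
          linarith [Real.neg_one_le_cos (s * x)]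
        · apply Integrable.mono' (integrable_const (2:ℝ))
          · apply Continuous.aestronglyMeasurable; continuity
          · filter_upwards with s
            rw [Real.norm_eq_abs, _root_.abs_le]
            constructor <;> linarith [Real.neg_one_le_cos (s*x), Real.cos_le_one (s*x)]
  _ ≤ 4 := by
      rw [setIntegral_const, smul_eq_mul]
      have : (volume (Set.Ioc (0:ℝ) 2)).toReal = 2 := by
        rw [Real.volume_Ioc]
        norm_num
      rw [measureReal_def, this]
      norm_num

lemma Gfun_one_le {x : ℝ} (hx : 1 < |x|) : 1 ≤ Gfun x := by
  have hx0 : x ≠ 0 := by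
    intro h0
    rw [h0] at hx
    simp at hx
    exact absurd hx (by norm_num)
  rw [Gfun_eq x hx0]
  have : |Real.sin (2*x) / x| ≤ 1 := by
    rw [abs_div]
    rw [div_le_one (by linarith : (0:ℝ) < |x|)]
    calc |Real.sin (2*x)| ≤ 1 := Real.abs_sin_le_one _
    _ ≤ |x| := hx.le
  have h2 := abs_le.mp this
  linarith [h2.1, h2.2]

lemma Gfun_stronglyMeasurable : MeasureTheory.StronglyMeasurable Gfun := by
  have : Continuous (fun p : ℝ × ℝ => 1 - Real.cos (p.2 * p.1)) := by continuity
  exact this.stronglyMeasurable.integral_prod_right'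

lemma integrable_Gfun (ν : Measure ℝ) [IsProbabilityMeasure ν] : Integrable Gfun ν := by
  apply Integrable.mono' (integrable_const (4:ℝ))
  · exact Gfun_stronglyMeasurable.aestronglyMeasurable
  · filter_upwards with x
    rw [Real.norm_eq_abs, _root_.abs_of_nonneg (Gfun_nonneg x)]
    exact Gfun_le x

lemma large_mass_bound (ν : Measure ℝ) [IsProbabilityMeasure ν] :
    (ν Sballᶜ).toReal ≤ ∫ s in Set.Ioc (0:ℝ) 2, (1 - cosInt ν s) := by
  have step1 : (ν Sballᶜ).toReal ≤ ∫ x, Gfun x ∂ν := by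
    calc (ν Sballᶜ).toReal = ∫ _ in Sballᶜ, (1:ℝ) ∂ν := by
          rw [setIntegral_const, smul_eq_mul, mul_one]; rfl
    _ ≤ ∫ x in Sballᶜ, Gfun x ∂ν := by
        apply setIntegral_mono_on (integrable_const 1) (integrable_Gfun ν).restrict
          measurableSet_Sball.compl
        intro x hx
        apply Gfun_one_le
        simpa [Sball] using hx
    _ ≤ ∫ x, Gfun x ∂ν := by
        apply setIntegral_le_integral (integrable_Gfun ν)
        filter_upwards with x
        exact Gfun_nonneg x
  have step2 : ∫ x, Gfun x ∂ν = ∫ s in Set.Ioc (0:ℝ) 2, (1 - cosInt ν s) := by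
    rw [show (fun x => Gfun x) = fun x => ∫ s in Set.Ioc (0:ℝ) 2, (1 - Real.cos (s * x)) from rfl]
    rw [MeasureTheory.integral_integral_swap]
    · apply setIntegral_congr_fun measurableSet_Ioc
      intro s _
      dsimp only
      rw [one_sub_cosInt]
    · apply Integrable.mono' (integrable_const (2:ℝ))
      · apply Continuous.aestronglyMeasurable
        show Continuous fun p : ℝ × ℝ => 1 - Real.cos (p.2 * p.1)
        continuity
      · filter_upwards with p
        have : Function.uncurry (fun (x s : ℝ) => 1 - Real.cos (s * x)) p
            = 1 - Real.cos (p.2 * p.1) := rfl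
        rw [this, Real.norm_eq_abs, _root_.abs_le]
        constructor <;> linarith [Real.neg_one_le_cos (p.2*p.1), Real.cos_le_one (p.2*p.1)]
  rw [← step2]
  exact step1

lemma cosInt_double (ν : Measure ℝ) [IsProbabilityMeasure ν] (t : ℝ) :
    1 - cosInt ν (2*t) ≤ 4 * (1 - cosInt ν t) := by
  rw [one_sub_cosInt, one_sub_cosInt]
  rw [← MeasureTheory.integral_const_mul]
  apply integral_mono (integrable_one_sub_cos ν (2*t)) ((integrable_one_sub_cos ν t).const_mul 4)
  intro x
  dsimp only
  have e : (2*t)*x = 2*(t*x) := by ring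
  rw [e, Real.cos_two_mul]
  nlinarith [Real.neg_one_le_cos (t*x), Real.cos_le_one (t*x)]

lemma charFn_at_zero (ν : Measure ℝ) [IsProbabilityMeasure ν] : charFn ν 0 = 1 := by
  rw [charFn]
  simp

lemma cosInt_nonneg_symm (ρ : Measure ℝ) [IsProbabilityMeasure ρ] (t : ℝ) :
    0 ≤ cosInt (symMeas ρ) t := by
  rw [cosInt_eq_abs_sq]
  positivity

/-- `u_n(s)^n = P s` setup -/
lemma convPow_abs_sq (ρ ν : Measure ℝ) [IsProbabilityMeasure ρ]
    (hco : ν = convPow ρ n) (s : ℝ) :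
    (‖charFn ρ s‖ ^ 2) ^ n = ‖charFn ν s‖ ^ 2 := by
  rw [hco, charFn_convPow, norm_pow]
  ring


lemma id_pos (ν : Measure ℝ) (hID : IsInfinitelyDivisible ν) (s : ℝ) :
    0 < ‖charFn ν s‖ ^ 2 := by
  obtain ⟨hprob, hdiv⟩ := hID
  set P : ℝ → ℝ := fun s => ‖charFn ν s‖ ^ 2 with hP
  have hPcont : Continuous P := ((continuous_norm.comp (continuous_charFn ν)).pow 2)
  have hP0 : P 0 = 1 := by
    rw [hP]
    simp only [charFn_at_zero]
    simp
  have hPle : ∀ x : ℝ, P x ≤ 1 := by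
    intro x
    have h1 := abs_charFn_le_one ν x
    have h2 := norm_nonneg (charFn ν x)
    show ‖charFn ν x‖ ^ 2 ≤ 1
    nlinarith
  -- positivity near zero
  have hnear : ∃ δ : ℝ, 0 < δ ∧ ∀ x : ℝ, |x| ≤ δ → 0 < P x := by
    have h2 : ∀ᶠ x in nhds (0:ℝ), 1/2 < P x := by
      apply hPcont.continuousAt.eventually_const_lt
      rw [hP0]
      norm_num
    rw [Metric.eventually_nhds_iff] at h2
    obtain ⟨ε, hε, hball⟩ := h2
    refine ⟨ε/2, by linarith, fun x hx => ?_⟩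
    have : dist x 0 < ε := by
      rw [Real.dist_eq, sub_zero]
      linarith
    linarith [hball this]
  obtain ⟨δ, hδ, hδpos⟩ := hnear
  -- doubling
  have hdouble : ∀ x : ℝ, 0 < P x → 0 < P (2*x) := by
    intro x hx
    by_contra hle
    push_neg at hle
    have hzero : P (2*x) = 0 := le_antisymm hle (by positivity)
    obtain ⟨n, hn⟩ := exists_pow_lt_of_lt_one hx (by norm_num : (3:ℝ)/4 < 1)
    have hn1 : 0 < n := by
      rcases Nat.eq_zero_or_pos n with h0 | h
      · exfalso; rw [h0] at hn; simp at hn; linarith [hPle x]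
      · exact h
    obtain ⟨ρ, hρprob, hρ⟩ := hdiv n hn1
    have : IsProbabilityMeasure ρ := hρprob
    set u : ℝ → ℝ := fun s => ‖charFn ρ s‖ ^ 2 with hu
    have hupow : ∀ s, (u s) ^ n = P s := fun s => convPow_abs_sq ρ ν hρ s
    have hu2x : u (2*x) = 0 := by
      have := hupow (2*x)
      rw [hzero] at this
      exact pow_eq_zero_iff (by omega : n ≠ 0) |>.mp this
    -- cosInt relation
    have hucos : ∀ s, u s = cosInt (symMeas ρ) s := fun s => (cosInt_eq_abs_sq ρ s).symm
    have hkey : 1 - u (2*x) ≤ 4 * (1 - u x) := by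
      rw [hucos, hucos]
      exact cosInt_double (symMeas ρ) x
    rw [hu2x] at hkey
    have hux : u x ≤ 3/4 := by linarith
    have : P x ≤ (3/4)^n := by
      rw [← hupow x]
      apply pow_le_pow_left₀ _ hux
      rw [hu]; positivity
    linarith
  -- iterate doubling
  have hiter : ∀ k : ℕ, ∀ x : ℝ, |x| ≤ δ * 2^k → 0 < P x := by
    intro k
    induction k with
    | zero => intro x hx; exact hδpos x (by simpa using hx)
    | succ k ih =>
      intro x hx
      have h2 : |x/2| ≤ δ * 2^k := by
        rw [abs_div]
        rw [_root_.abs_two]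
        rw [div_le_iff₀ (by norm_num : (0:ℝ) < 2)]
        calc |x| ≤ δ * 2^(k+1) := hx
        _ = δ * 2^k * 2 := by ring
      have := hdouble (x/2) (ih (x/2) h2)
      have e : 2*(x/2) = x := by ring
      rwa [e] at this
  obtain ⟨k, hk⟩ := exists_nat_ge (|s|/δ)
  have hk2 : |s| ≤ δ * 2^k := by
    rw [div_le_iff₀ hδ] at hk
    calc |s| ≤ k * δ := hk
    _ ≤ 2^k * δ := by
        apply mul_le_mul_of_nonneg_right _ hδ.le
        exact_mod_cast (Nat.lt_two_pow_self (n := k)).le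
    _ = δ * 2^k := mul_comm _ _
  exact hiter k s hk2

lemma id_ridge (ν : Measure ℝ) (hID : IsInfinitelyDivisible ν) :
    ∃ A M : ℝ, 0 ≤ A ∧ 0 ≤ M ∧ ∀ t h : ℝ,
      |Real.log (‖charFn ν (t+h)‖ ^ 2) +
       Real.log (‖charFn ν (t-h)‖ ^ 2) -
       2 * Real.log (‖charFn ν t‖ ^ 2)| ≤ A * h^2 + M := by
  have hprob : IsProbabilityMeasure ν := hID.1
  have hdiv := hID.2
  set P : ℝ → ℝ := fun s => ‖charFn ν s‖ ^ 2 with hPdef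
  have hPpos : ∀ s, 0 < P s := fun s => id_pos ν hID s
  have hPle : ∀ x : ℝ, P x ≤ 1 := by
    intro x
    have h1 := abs_charFn_le_one ν x
    have h2 := norm_nonneg (charFn ν x)
    show ‖charFn ν x‖ ^ 2 ≤ 1
    nlinarith
  have hPcont : Continuous P := ((continuous_norm.comp (continuous_charFn ν)).pow 2)
  set Pl : ℝ → ℝ := fun s => Real.log (P s) with hPldef
  have hPl_nonpos : ∀ s, Pl s ≤ 0 := fun s => Real.log_nonpos (hPpos s).le (hPle s)
  have hPlcont : Continuous Pl := by
    rw [continuous_iff_continuousAt]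
    intro x
    exact (Real.continuousAt_log (ne_of_gt (hPpos x))).comp hPcont.continuousAt
  -- sup of -Pl on [0,2]
  obtain ⟨s₀, hs₀mem, hs₀'⟩ := (isCompact_Icc (a := (0:ℝ)) (b := 2)).exists_isMaxOn
    ⟨0, by norm_num, by norm_num⟩ (hPlcont.neg.continuousOn)
  have hs₀ : ∀ s ∈ Set.Icc (0:ℝ) 2, -Pl s ≤ -Pl s₀ := fun s hs => hs₀' hs
  set Msup : ℝ := -Pl s₀ with hMsup
  have hMsup_nonneg : 0 ≤ Msup := by
    have := hPl_nonpos s₀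
    simp only [hMsup]
    linarith
  have hMsup_bound : ∀ s ∈ Set.Icc (0:ℝ) 2, -Pl s ≤ Msup := hs₀
  set A : ℝ := Real.pi^2/2 * (-Pl 1) with hAdef
  have hA_nonneg : 0 ≤ A := by
    have := hPl_nonpos 1
    have hpi := Real.pi_pos
    rw [hAdef]
    nlinarith
  refine ⟨A, 8 * Msup, hA_nonneg, by linarith, ?_⟩
  intro t h
  apply le_of_forall_pos_le_add
  intro ε hε
  set D : ℝ := (Pl (t+h))^2 + (Pl (t-h))^2 + 2*(Pl t)^2 with hD
  have hD_nonneg : 0 ≤ D := by positivity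
  obtain ⟨n, hn⟩ := exists_nat_ge
    (max (max |Pl (t+h)| (max |Pl (t-h)| |Pl t|)) (max (D/ε) 1))
  have hn1R : (1:ℝ) ≤ n := le_trans (le_max_of_le_right (le_max_right _ _)) hn
  have hnpos : 0 < n := by exact_mod_cast lt_of_lt_of_le zero_lt_one hn1R
  have hnR : (0:ℝ) < n := by exact_mod_cast hnpos
  have hnD : D/ε ≤ n := le_trans (le_max_of_le_right (le_max_left _ _)) hn
  have hnl1 : |Pl (t+h)| ≤ n := le_trans (le_max_of_le_left (le_max_left _ _)) hn
  have hnl2 : |Pl (t-h)| ≤ n := le_trans (le_max_of_le_left (le_max_of_le_right (le_max_left _ _))) hn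
  have hnl3 : |Pl t| ≤ n := le_trans (le_max_of_le_left (le_max_of_le_right (le_max_right _ _))) hn
  obtain ⟨ρ, hρprob, hρ⟩ := hdiv n hnpos
  haveI := hρprob
  set ν' : Measure ℝ := symMeas ρ with hν'
  haveI : IsProbabilityMeasure ν' := symMeas_prob ρ
  set u : ℝ → ℝ := fun s => cosInt ν' s with hu
  have hu_abs : ∀ s, u s = ‖charFn ρ s‖ ^ 2 := fun s => cosInt_eq_abs_sq ρ s
  have hupow : ∀ s, (u s) ^ n = P s := by
    intro s
    rw [hu_abs s]
    exact convPow_abs_sq ρ ν hρ s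
  have hu_pos : ∀ s, 0 < u s := by
    intro s
    rcases lt_or_eq_of_le (by rw [hu_abs s]; positivity : (0:ℝ) ≤ u s) with h' | h'
    · exact h'
    · exfalso
      have := hupow s
      rw [← h', zero_pow (by omega : n ≠ 0)] at this
      exact absurd this.symm (ne_of_gt (hPpos s))
  have hu_le1 : ∀ s, u s ≤ 1 := fun s => cosInt_le_one ν' s
  have hlog : ∀ s, Pl s = n * Real.log (u s) := by
    intro s
    rw [hPldef]
    simp only
    rw [← hupow s, Real.log_pow]
  have key1 : ∀ s, (n:ℝ) * (1 - u s) ≤ -Pl s := by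
    intro s
    have h1 : Real.log (u s) + 1 ≤ u s := by
      have := Real.add_one_le_exp (Real.log (u s))
      rwa [Real.exp_log (hu_pos s)] at this
    have h2 : 1 - u s ≤ -Real.log (u s) := by linarith
    calc (n:ℝ) * (1 - u s) ≤ (n:ℝ) * (-Real.log (u s)) := by
          apply mul_le_mul_of_nonneg_left h2 hnR.le
    _ = -Pl s := by rw [hlog s]; ring
  have key2 : (n:ℝ) * ∫ x in Sball, x^2 ∂ν' ≤ Real.pi^2/2 * (-Pl 1) := by
    have hsq := sq_small_bound ν'
    have hpi := Real.pi_pos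
    have h1 : ∫ x in Sball, x^2 ∂ν' ≤ Real.pi^2/2 * (1 - u 1) := by
      rw [div_mul_eq_mul_div, le_div_iff₀ (by positivity : (0:ℝ) < 2)]
      have := mul_le_mul_of_nonneg_left hsq (by positivity : (0:ℝ) ≤ Real.pi^2/2)
      calc (∫ x in Sball, x^2 ∂ν') * 2
          = Real.pi^2/2 * (2/Real.pi^2 * ∫ x in Sball, x^2 ∂ν') * 2 := by
            field_simp
      _ ≤ Real.pi^2/2 * (1 - cosInt ν' 1) * 2 := by nlinarith
      _ = Real.pi^2 * (1 - u 1) := by rw [hu]; ring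
    calc (n:ℝ) * ∫ x in Sball, x^2 ∂ν' ≤ (n:ℝ) * (Real.pi^2/2 * (1 - u 1)) :=
          mul_le_mul_of_nonneg_left h1 hnR.le
    _ = Real.pi^2/2 * ((n:ℝ) * (1 - u 1)) := by ring
    _ ≤ Real.pi^2/2 * (-Pl 1) := by
        apply mul_le_mul_of_nonneg_left (key1 1) (by positivity)
  have key3 : (n:ℝ) * (ν' Sballᶜ).toReal ≤ 2 * Msup := by
    have hlmb := large_mass_bound ν'
    have h1 : (n:ℝ) * (ν' Sballᶜ).toReal ≤ ∫ s in Set.Ioc (0:ℝ) 2, (n:ℝ) * (1 - cosInt ν' s) := by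
      rw [MeasureTheory.integral_const_mul]
      exact mul_le_mul_of_nonneg_left hlmb hnR.le
    have h2 : ∫ s in Set.Ioc (0:ℝ) 2, (n:ℝ) * (1 - cosInt ν' s) ≤ ∫ _ in Set.Ioc (0:ℝ) 2, Msup := by
      apply setIntegral_mono_on ?_ (integrable_const _) measurableSet_Ioc
      · intro s hs
        have hmem : s ∈ Set.Icc (0:ℝ) 2 := ⟨hs.1.le, hs.2⟩
        calc (n:ℝ) * (1 - cosInt ν' s) ≤ -Pl s := key1 s
        _ ≤ Msup := hMsup_bound s hmem
      · apply Integrable.mono' (integrable_const ((n:ℝ) * 2))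
        · exact (continuous_const.mul (continuous_const.sub (continuous_cosInt ν'))).aestronglyMeasurable
        · filter_upwards with s
          rw [Real.norm_eq_abs, _root_.abs_mul, Nat.abs_cast]
          apply mul_le_mul_of_nonneg_left _ hnR.le
          rw [_root_.abs_le]
          constructor
          · linarith [cosInt_le_one ν' s]
          · have : 0 ≤ cosInt ν' s := cosInt_nonneg_symm ρ s
            linarith
    have h3 : ∫ _ in Set.Ioc (0:ℝ) 2, Msup ∂volume = 2 * Msup := by
      rw [setIntegral_const, smul_eq_mul]
      congr 1
      rw [measureReal_def, Real.volume_Ioc]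
      norm_num
    calc (n:ℝ) * (ν' Sballᶜ).toReal ≤ ∫ s in Set.Ioc (0:ℝ) 2, (n:ℝ) * (1 - cosInt ν' s) := h1
    _ ≤ ∫ _ in Set.Ioc (0:ℝ) 2, Msup := h2
    _ = 2 * Msup := h3
  have key4 : ∀ h' : ℝ, (n:ℝ) * (1 - u h') ≤ h'^2/2 * A + 4*Msup := by
    intro h'
    have hsplit := small_large_split ν' h'
    have := mul_le_mul_of_nonneg_left hsplit hnR.le
    calc (n:ℝ) * (1 - u h')
        ≤ (n:ℝ) * (h'^2/2 * ∫ x in Sball, x^2 ∂ν' + 2 * (ν' Sballᶜ).toReal) := this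
    _ = h'^2/2 * ((n:ℝ) * ∫ x in Sball, x^2 ∂ν') + 2 * ((n:ℝ) * (ν' Sballᶜ).toReal) := by ring
    _ ≤ h'^2/2 * (Real.pi^2/2 * (-Pl 1)) + 2 * (2*Msup) := by
        have h4 := mul_le_mul_of_nonneg_left key2 (by positivity : (0:ℝ) ≤ h'^2/2)
        linarith [mul_le_mul_of_nonneg_left key3 (by norm_num : (0:ℝ) ≤ 2)]
    _ = h'^2/2 * A + 4*Msup := by rw [hAdef]; ring
  have key5 : |(n:ℝ) * (u (t+h) + u (t-h) - 2 * u t)| ≤ A * h^2 + 8*Msup := by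
    rw [_root_.abs_mul, Nat.abs_cast]
    have hcc := cosInt_combo_bound ν' t h
    calc (n:ℝ) * |u (t+h) + u (t-h) - 2 * u t| ≤ (n:ℝ) * (2 * (1 - u h)) :=
          mul_le_mul_of_nonneg_left hcc hnR.le
    _ = 2 * ((n:ℝ) * (1 - u h)) := by ring
    _ ≤ 2 * (h^2/2 * A + 4*Msup) := by
        have := key4 h
        linarith
    _ = A * h^2 + 8*Msup := by ring
  have key6 : ∀ s : ℝ, |Pl s| ≤ n → |Pl s + (n:ℝ) * (1 - u s)| ≤ (Pl s)^2 / n := by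
    intro s hs
    set y : ℝ := Real.log (u s) with hy
    have hys : Pl s = n * y := hlog s
    have hny : |y| ≤ 1 := by
      rw [hys, _root_.abs_mul, Nat.abs_cast] at hs
      by_contra hcon
      push_neg at hcon
      nlinarith
    have huexp : u s = Real.exp y := (Real.exp_log (hu_pos s)).symm
    have hexp := Real.abs_exp_sub_one_sub_id_le hny
    have heq : Pl s + (n:ℝ) * (1 - u s) = -((n:ℝ) * (Real.exp y - 1 - y)) := by
      rw [hys, huexp]
      ring
    rw [heq, abs_neg, _root_.abs_mul, Nat.abs_cast]
    calc (n:ℝ) * |Real.exp y - 1 - y| ≤ (n:ℝ) * y^2 :=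
          mul_le_mul_of_nonneg_left hexp hnR.le
    _ = (Pl s)^2 / n := by
        rw [hys]
        field_simp
  -- assemble
  have e1 := key6 (t+h) hnl1
  have e2 := key6 (t-h) hnl2
  have e3 := key6 t hnl3
  have heqD : Pl (t+h) + Pl (t-h) - 2 * Pl t
      = (Pl (t+h) + (n:ℝ)*(1 - u (t+h))) + (Pl (t-h) + (n:ℝ)*(1 - u (t-h)))
        - 2 * (Pl t + (n:ℝ)*(1 - u t)) + (n:ℝ) * (u (t+h) + u (t-h) - 2 * u t) := by
    ring
  have hDn : D / n ≤ ε := by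
    rw [div_le_iff₀ hnR]
    rw [div_le_iff₀ hε] at hnD
    linarith
  have habs : |Pl (t+h) + Pl (t-h) - 2 * Pl t| ≤ A * h^2 + 8*Msup + D/n := by
    rw [heqD]
    have a1 := abs_le.mp e1
    have a2 := abs_le.mp e2
    have a3 := abs_le.mp e3
    have a5 := abs_le.mp key5
    have hDexp : D / n = (Pl (t+h))^2/n + (Pl (t-h))^2/n + 2*((Pl t)^2/n) := by
      rw [hD]
      field_simp
    rw [_root_.abs_le, hDexp]
    constructor <;>
      linarith [a1.1, a1.2, a2.1, a2.2, a3.1, a3.2, a5.1, a5.2]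
  calc |Pl (t+h) + Pl (t-h) - 2 * Pl t| ≤ A * h^2 + 8*Msup + D/n := habs
  _ ≤ A * h^2 + 8*Msup + ε := by linarith

theorem rid_main
    (μ : Measure ℝ) [IsProbabilityMeasure μ]
    (hRID : ∃ μ₁ μ₂ : Measure ℝ, IsInfinitelyDivisible μ₁ ∧ IsInfinitelyDivisible μ₂ ∧
      μ₁ = Measure.conv μ μ₂) :
    ∃ B C : ℝ, 0 ≤ B ∧ 0 < C ∧ ∀ t h : ℝ,
      ‖charFn μ (t - h) * charFn μ (t + h)‖ ≤
        C * Real.exp (B * h ^ 2) * ‖charFn μ t‖ ^ 2 := by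
  obtain ⟨μ₁, μ₂, h1, h2, hconv⟩ := hRID
  haveI hprob1 : IsProbabilityMeasure μ₁ := h1.1
  haveI hprob2 : IsProbabilityMeasure μ₂ := h2.1
  obtain ⟨A₁, M₁, hA₁, hM₁, hridge1⟩ := id_ridge μ₁ h1
  obtain ⟨A₂, M₂, hA₂, hM₂, hridge2⟩ := id_ridge μ₂ h2
  set q : ℝ → ℝ := fun s => ‖charFn μ s‖ ^ 2 with hqdef
  set r : ℝ → ℝ := fun s => ‖charFn μ₂ s‖ ^ 2 with hrdef
  set p1 : ℝ → ℝ := fun s => ‖charFn μ₁ s‖ ^ 2 with hp1def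
  have hfac : ∀ s, p1 s = q s * r s := by
    intro s
    rw [hp1def, hqdef, hrdef]
    simp only
    rw [hconv, charFn_conv, norm_mul]
    ring
  have hp1pos : ∀ s, 0 < p1 s := fun s => id_pos μ₁ h1 s
  have hrpos : ∀ s, 0 < r s := fun s => id_pos μ₂ h2 s
  have hqpos : ∀ s, 0 < q s := by
    intro s
    have := hp1pos s
    rw [hfac s] at this
    by_contra hc
    push_neg at hc
    nlinarith [hrpos s]
  have hlogq : ∀ s, Real.log (q s) = Real.log (p1 s) - Real.log (r s) := by
    intro s
    rw [hfac s, Real.log_mul (ne_of_gt (hqpos s)) (ne_of_gt (hrpos s))]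
    ring
  refine ⟨(A₁ + A₂)/2, Real.exp ((M₁ + M₂)/2), by linarith, Real.exp_pos _, ?_⟩
  intro t h
  have hcombo : Real.log (q (t+h)) + Real.log (q (t-h)) - 2 * Real.log (q t)
      ≤ (A₁ + A₂) * h^2 + (M₁ + M₂) := by
    have c1 := abs_le.mp (hridge1 t h)
    have c2 := abs_le.mp (hridge2 t h)
    have e1 := hlogq (t+h)
    have e2 := hlogq (t-h)
    have e3 := hlogq t
    -- rewrite combo of q as combo of p1 minus combo of r
    rw [e1, e2, e3]
    linarith [c1.1, c1.2, c2.1, c2.2]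
  have hmain : q (t-h) * q (t+h)
      ≤ Real.exp (M₁ + M₂) * Real.exp ((A₁ + A₂) * h^2) * (q t)^2 := by
    have hlhs : q (t-h) * q (t+h) = Real.exp (Real.log (q (t+h)) + Real.log (q (t-h))) := by
      rw [Real.exp_add, Real.exp_log (hqpos (t+h)), Real.exp_log (hqpos (t-h))]
      ring
    have hrhs : Real.exp (M₁ + M₂) * Real.exp ((A₁ + A₂) * h^2) * (q t)^2
        = Real.exp ((A₁ + A₂) * h^2 + (M₁ + M₂) + 2 * Real.log (q t)) := by
      rw [show (A₁ + A₂) * h^2 + (M₁ + M₂) + 2 * Real.log (q t)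
          = ((M₁ + M₂) + ((A₁ + A₂) * h^2)) + (Real.log (q t) + Real.log (q t)) by ring]
      simp only [Real.exp_add, Real.exp_log (hqpos t)]
      ring
    rw [hlhs, hrhs]
    apply Real.exp_le_exp.mpr
    linarith
  -- take square roots
  have hgoal_sq : (‖charFn μ (t - h) * charFn μ (t + h)‖)^2
      ≤ (Real.exp ((M₁ + M₂)/2) * Real.exp ((A₁ + A₂)/2 * h ^ 2) * ‖charFn μ t‖ ^ 2)^2 := by
    rw [norm_mul]
    have hLHS : (‖charFn μ (t-h)‖ * ‖charFn μ (t+h)‖)^2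
        = q (t-h) * q (t+h) := by
      rw [hqdef]
      ring
    have hRHS : (Real.exp ((M₁ + M₂)/2) * Real.exp ((A₁ + A₂)/2 * h ^ 2) * ‖charFn μ t‖ ^ 2)^2
        = Real.exp (M₁ + M₂) * Real.exp ((A₁ + A₂) * h^2) * (q t)^2 := by
      rw [hqdef]
      simp only
      rw [← Real.exp_add, ← Real.exp_add]
      rw [mul_pow, sq (Real.exp _), ← Real.exp_add]
      congr 2
      ring
    rw [hLHS, hRHS]
    exact hmain
  have h1' : 0 ≤ ‖charFn μ (t - h) * charFn μ (t + h)‖ := norm_nonneg _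
  have h2' : 0 ≤ Real.exp ((M₁ + M₂)/2) * Real.exp ((A₁ + A₂)/2 * h ^ 2) * ‖charFn μ t‖ ^ 2 := by
    positivity
  exact (pow_le_pow_iff_left₀ h1' h2' (by norm_num : (2:ℕ) ≠ 0)).mp hgoal_sq

/-- For a rational-infinitely divisible probability measure `μ` on `ℝ` with
characteristic function `f`, there exist `B ≥ 0` and `C > 0` such that
`|f(t−h)·f(t+h)| ≤ C·exp(B·h²)·|f(t)|²` for all real `t, h`. -/
theorem rid_charFn_quotient_bound
    (μ : Measure ℝ) [IsProbabilityMeasure μ]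
    (hRID : IsRationalInfinitelyDivisible μ) :
    ∃ B C : ℝ, 0 ≤ B ∧ 0 < C ∧ ∀ t h : ℝ,
      ‖charFn μ (t - h) * charFn μ (t + h)‖ ≤
        C * Real.exp (B * h ^ 2) * ‖charFn μ t‖ ^ 2 :=
  rid_main μ hRID
end
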